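/- arXiv:1602.02792 — 10 statements merged into one kernel-verified Lean document; each statement's English description precedes it below -/
import Mathlib

section
/- Suppose there exist real constants α, β, γ and a bounded measurable function ψ : S_X → ℝ such that for every x ∈ S_X and y ∈ S_Y: (α f_X(x) + β f_Y(x) + γ) + λ (α g_X(y) + β g_Y(y) + γ) = ψ(x) − λ² ∫_{S_X} ψ(s) dσ_X[x,y](s) − (1−λ²) ∫_{S_X} ψ(s) dσ_X^0(s). Then for every play distribution (ν_t)_{t≥0} consistent with (σ_X^0, σ_X), the average payoffs π_X := (1−λ) ∑_{t=0}^∞ λ^{2t} ∫_{S_X×S_Y} (f_X(x) + λ g_X(y)) dν_t(x,y) and π_Y := (1−λ) ∑_{t=0}^∞ λ^{2t} ∫_{S_X×S_Y} (f_Y(x) + λ g_Y(y)) dν_t(x,y) satisfy α π_X + β π_Y + γ = 0. In other words, if player X moves first, the memory-one strategy (σ_X^0, σ_X) unilaterally enforces α π_X + β π_Y + γ = 0 for every strategy of player Y. -/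
open MeasureTheory ProbabilityTheory

/-! Put `a t = ∫ ψ(x) dν_t`. Consistency of `ν` turns `∫ ψ dσX0` into `a 0` and the average over
`ν t` of `∫ ψ dσX[x,y]` into `a (t+1)`, so integrating the identity against `ν t` gives, with
`u t, v t` the round-`t` payoffs of `X` and `Y`,
`α u t + β v t + γ (1 + λ) = a t - λ² a (t+1) - (1 - λ²) a 0`.
Weighting by `λ^(2t)` and summing, the right-hand side telescopes to `a 0 - a 0 = 0`, while the
left-hand side is `(α π_X + β π_Y + γ) / (1 - λ)`. -/

lemma abs_add_mul_le_one_add_mul {l x y C : ℝ} (hl : 0 ≤ l) (hx : |x| ≤ C) (hy : |y| ≤ C) :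
    |x + l * y| ≤ (1 + l) * C :=
  calc |x + l * y| ≤ |x| + l * |y| := by
        simpa only [abs_mul, abs_of_nonneg hl] using abs_add_le x (l * y)
    _ ≤ C + l * C := by gcongr
    _ = (1 + l) * C := by ring

lemma summable_pow_mul_of_abs_le {r : ℝ} (hr0 : 0 ≤ r) (hr1 : r < 1) {a : ℕ → ℝ} {C : ℝ}
    (ha : ∀ t, |a t| ≤ C) : Summable fun t ↦ r ^ t * a t :=
  .of_norm_bounded ((summable_geometric_of_lt_one hr0 hr1).mul_right C) fun t ↦ by
    rw [Real.norm_eq_abs, abs_mul, abs_of_nonneg (pow_nonneg hr0 t)]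
    exact mul_le_mul_of_nonneg_left (ha t) (pow_nonneg hr0 t)

lemma hasSum_pow_mul_sub_mul_succ {r : ℝ} (hr0 : 0 ≤ r) (hr1 : r < 1) {a : ℕ → ℝ} {C : ℝ}
    (ha : ∀ t, |a t| ≤ C) : HasSum (fun t ↦ r ^ t * (a t - r * a (t + 1))) (a 0) := by
  have hb := (summable_pow_mul_of_abs_le hr0 hr1 ha).hasSum
  have hshift := (hasSum_nat_add_iff' 1).mpr hb
  rw [Finset.sum_range_one, pow_zero, one_mul] at hshift
  have := (hb.sub hshift).congr_fun (g := fun t ↦ r ^ t * (a t - r * a (t + 1))) fun t ↦ by ring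
  rwa [sub_sub_cancel] at this

lemma linear_relation_of_potential {lam : ℝ} (hlam : |lam| < 1) {u v a : ℕ → ℝ} {B C : ℝ}
    (hu : ∀ t, |u t| ≤ B) (hv : ∀ t, |v t| ≤ B) (ha : ∀ t, |a t| ≤ C) (α β γ : ℝ)
    (h : ∀ t, α * u t + β * v t + γ * (1 + lam) = a t - lam ^ 2 * a (t + 1) - (1 - lam ^ 2) * a 0) :
    α * ((1 - lam) * ∑' t, lam ^ (2 * t) * u t) + β * ((1 - lam) * ∑' t, lam ^ (2 * t) * v t)
      + γ = 0 := by
  obtain ⟨hl, hr⟩ := abs_lt.mp hlam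
  have hr0 : 0 ≤ lam ^ 2 := sq_nonneg lam
  have hr1 : lam ^ 2 < 1 := by nlinarith
  have hgeo := hasSum_geometric_of_lt_one hr0 hr1
  have hsum := (((summable_pow_mul_of_abs_le hr0 hr1 hu).hasSum.mul_left α).add
    ((summable_pow_mul_of_abs_le hr0 hr1 hv).hasSum.mul_left β)).add (hgeo.mul_left (γ * (1 + lam)))
  have key := hsum.unique (((hasSum_pow_mul_sub_mul_succ hr0 hr1 ha).sub
    (hgeo.mul_left ((1 - lam ^ 2) * a 0))).congr_fun fun t ↦ by
      linear_combination (lam ^ 2) ^ t * h t)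
  have hp : 1 + lam ≠ 0 := by linarith
  have hm : 1 - lam ≠ 0 := by linarith
  rw [show (1 : ℝ) - lam ^ 2 = (1 - lam) * (1 + lam) by ring] at key
  field_simp at key
  simp only [pow_mul]
  linear_combination key

section Integral

variable {Ω : Type*} [MeasurableSpace Ω] {μ : Measure Ω}

lemma abs_integral_le_of_forall_abs_le [IsProbabilityMeasure μ] {f : Ω → ℝ} {C : ℝ}
    (h : ∀ ω, |f ω| ≤ C) : |∫ ω, f ω ∂μ| ≤ C := by
  simpa using norm_integral_le_of_norm_le_const (μ := μ) (f := f) (ae_of_all _ h)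

lemma integrable_of_forall_abs_le [IsFiniteMeasure μ] {f : Ω → ℝ} (hf : Measurable f) {C : ℝ}
    (h : ∀ ω, |f ω| ≤ C) : Integrable f μ :=
  .of_bound hf.aestronglyMeasurable C (ae_of_all _ h)

lemma integral_affine_identity [IsProbabilityMeasure μ] {f g φ G : Ω → ℝ}
    (hf : Integrable f μ) (hg : Integrable g μ) (hφ : Integrable φ μ) (hG : Integrable G μ)
    {α β c r d : ℝ} (h : ∀ ω, α * f ω + β * g ω + c = φ ω - r * G ω - d) :
    α * ∫ ω, f ω ∂μ + β * ∫ ω, g ω ∂μ + c = ∫ ω, φ ω ∂μ - r * ∫ ω, G ω ∂μ - d := by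
  have := integral_congr_ae (μ := μ) (ae_of_all _ h)
  rwa [integral_add (by fun_prop) (by fun_prop), integral_add (by fun_prop) (by fun_prop),
    integral_sub (by fun_prop) (by fun_prop), integral_sub (by fun_prop) (by fun_prop),
    integral_const_mul, integral_const_mul, integral_const_mul, integral_const, integral_const, probReal_univ, one_smul, one_smul] at this

end Integral

section Marginal

variable {α β γ E : Type*} [MeasurableSpace α] [MeasurableSpace β] [MeasurableSpace γ]
  [NormedAddCommGroup E] [NormedSpace ℝ E]

lemma integral_fst_eq_of_apply_prod_univ {μ : Measure (α × β)} {m : Measure α}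
    (h : ∀ s, MeasurableSet s → μ (s ×ˢ Set.univ) = m s) {f : α → E}
    (hf : AEStronglyMeasurable f m) : ∫ q, f q.1 ∂μ = ∫ x, f x ∂m := by
  have hmap : μ.map Prod.fst = m := by
    ext s hs
    rw [Measure.map_apply measurable_fst hs, ← Set.prod_univ, h s hs]
  subst hmap
  exact (integral_map measurable_fst.aemeasurable hf).symm

lemma integral_measure_comp {μ : Measure γ} [SFinite μ] {κ : Kernel γ α} [IsSFiniteKernel κ]
    {f : α → E} (hf : Integrable f (κ ∘ₘ μ)) :
    ∫ x, f x ∂(κ ∘ₘ μ) = ∫ z, ∫ x, f x ∂κ z ∂μ := by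
  rw [Measure.comp_eq_comp_const_apply] at hf ⊢
  exact Kernel.integral_comp hf

lemma integral_integral_eq_integral_fst {μ : Measure γ} [IsFiniteMeasure μ] {κ : Kernel γ α}
    [IsFiniteKernel κ] {μ' : Measure (α × β)}
    (h : ∀ s, MeasurableSet s → μ' (s ×ˢ Set.univ) = ∫⁻ z, κ z s ∂μ) {f : α → ℝ}
    (hf : Measurable f) {C : ℝ} (hC : ∀ x, |f x| ≤ C) :
    ∫ z, ∫ x, f x ∂κ z ∂μ = ∫ q, f q.1 ∂μ' := by
  rw [← integral_measure_comp (integrable_of_forall_abs_le hf hC),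
    integral_fst_eq_of_apply_prod_univ _ hf.aestronglyMeasurable]
  intro s hs
  rw [h s hs, Measure.bind_apply hs κ.aemeasurable]

end Marginal

/-- Autocratic strategies for strictly-alternating games in which `X` moves
first: if the functional identity holds for some bounded measurable `ψ`, then
the memory-one strategy `(σX0, σX)` unilaterally enforces
`α π_X + β π_Y + γ = 0` for every strategy of player `Y` (i.e. for every
consistent play distribution). -/
theorem stmt_2
    {SX SY : Type*} [MeasurableSpace SX] [MeasurableSpace SY]
    (lam : ℝ) (hlam0 : 0 < lam) (hlam1 : lam < 1)
    (fX fY : SX → ℝ) (gX gY : SY → ℝ)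
    (hfXm : Measurable fX) (hfYm : Measurable fY)
    (hgXm : Measurable gX) (hgYm : Measurable gY)
    (Cf : ℝ) (hfXb : ∀ x, |fX x| ≤ Cf) (hfYb : ∀ x, |fY x| ≤ Cf)
    (hgXb : ∀ y, |gX y| ≤ Cf) (hgYb : ∀ y, |gY y| ≤ Cf)
    (σX0 : Measure SX) [IsProbabilityMeasure σX0]
    (σX : ProbabilityTheory.Kernel (SX × SY) SX) [ProbabilityTheory.IsMarkovKernel σX]
    (α β γ : ℝ)
    (ψ : SX → ℝ) (hψm : Measurable ψ) (C : ℝ) (hψb : ∀ s, |ψ s| ≤ C)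
    (hid : ∀ (x : SX) (y : SY),
      (α * fX x + β * fY x + γ) + lam * (α * gX y + β * gY y + γ) =
        ψ x - lam ^ 2 * (∫ s, ψ s ∂(σX (x, y)))
          - (1 - lam ^ 2) * (∫ s, ψ s ∂σX0))
    (ν : ℕ → Measure (SX × SY)) (hν : ∀ t, IsProbabilityMeasure (ν t))
    (hν0 : ∀ E : Set SX, MeasurableSet E →
      ν 0 (E ×ˢ (Set.univ : Set SY)) = σX0 E)
    (hνsucc : ∀ (t : ℕ) (E : Set SX), MeasurableSet E →
      ν (t + 1) (E ×ˢ (Set.univ : Set SY)) = ∫⁻ q, σX q E ∂(ν t)) :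
    α * ((1 - lam) * ∑' t : ℕ, lam ^ (2 * t) *
          ∫ q, (fX q.1 + lam * gX q.2) ∂(ν t))
      + β * ((1 - lam) * ∑' t : ℕ, lam ^ (2 * t) *
          ∫ q, (fY q.1 + lam * gY q.2) ∂(ν t))
      + γ = 0 := by
  have := hν
  have hPX : ∀ q : SX × SY, |fX q.1 + lam * gX q.2| ≤ (1 + lam) * Cf := fun q ↦
    abs_add_mul_le_one_add_mul hlam0.le (hfXb q.1) (hgXb q.2)
  have hPY : ∀ q : SX × SY, |fY q.1 + lam * gY q.2| ≤ (1 + lam) * Cf := fun q ↦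
    abs_add_mul_le_one_add_mul hlam0.le (hfYb q.1) (hgYb q.2)
  have hψfst : ∀ q : SX × SY, |ψ q.1| ≤ C := fun q ↦ hψb q.1
  have hGm : Measurable fun q ↦ ∫ s, ψ s ∂σX q :=
    (hψm.stronglyMeasurable.integral_kernel (κ := σX)).measurable
  have hGb : ∀ q, |∫ s, ψ s ∂σX q| ≤ C := fun q ↦ abs_integral_le_of_forall_abs_le hψb
  have hinit : ∫ s, ψ s ∂σX0 = ∫ q, ψ q.1 ∂ν 0 :=
    (integral_fst_eq_of_apply_prod_univ hν0 hψm.aestronglyMeasurable).symm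
  have hstep : ∀ t, ∫ q, ∫ s, ψ s ∂σX q ∂ν t = ∫ q, ψ q.1 ∂ν (t + 1) := fun t ↦
    integral_integral_eq_integral_fst (hνsucc t) hψm hψb
  refine linear_relation_of_potential (abs_lt.mpr ⟨by linarith, hlam1⟩)
    (fun t ↦ abs_integral_le_of_forall_abs_le (μ := ν t) hPX)
    (fun t ↦ abs_integral_le_of_forall_abs_le (μ := ν t) hPY)
    (fun t ↦ abs_integral_le_of_forall_abs_le (μ := ν t) hψfst) α β γ fun t ↦ ?_
  rw [← hstep t, ← hinit]
  exact integral_affine_identity (integrable_of_forall_abs_le (by fun_prop) hPX)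
    (integrable_of_forall_abs_le (by fun_prop) hPY) (integrable_of_forall_abs_le (by fun_prop) hψfst)
    (integrable_of_forall_abs_le hGm hGb) fun q ↦ by linear_combination hid q.1 q.2
end

section
/- Let (ν_t)_{t≥0} be any play distribution consistent with the memory-one strategy (σ_X^0[·], σ_X) of player X and the initial action σ_Y^0 of player Y in the strictly-alternating game in which Y moves first. Then for every measurable set E ⊆ S_X, the series ∑_{t=0}^∞ λ^{2t+1} ∫_{S_X×S_Y} [1_{E×S_Y}(x,y) − λ² · σ_X[x,y](E)] dν_t(x,y) converges and equals λ ∫_{S_Y} σ_X^0[y_0](E) dσ_Y^0(y_0). -/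
/-!
Writing `a t = ν_t(E × S_Y)`, the consistency condition turns the `t`-th integral into
`a t - λ² a (t+1)`, so the `t`-th term is `f t - f (t+1)` with `f t = λ^(2t+1) a t`.
The series telescopes to `f 0 = λ a 0`, and `a 0` is the initial-round probability of `E`.
-/

open MeasureTheory ProbabilityTheory

theorem Summable.hasSum_sub_succ {G : Type*} [AddCommGroup G] [TopologicalSpace G]
    [IsTopologicalAddGroup G] {f : ℕ → G} (hf : Summable f) :
    HasSum (fun n => f n - f (n + 1)) (f 0) := by
  have hshift : HasSum (fun n => f (n + 1)) (∑' n, f n - f 0) := by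
    simpa using (hasSum_nat_add_iff' 1).mpr hf.hasSum
  simpa using hf.hasSum.sub hshift

theorem summable_pow_mul_of_abs_le_one {r : ℝ} (hr0 : 0 ≤ r) (hr1 : r < 1) {a : ℕ → ℝ}
    (ha : ∀ n, |a n| ≤ 1) : Summable (fun n => r ^ n * a n) :=
  (summable_geometric_of_lt_one hr0 hr1).of_norm_bounded fun n => by
    simpa [abs_mul, abs_of_nonneg hr0] using
      mul_le_of_le_one_right (pow_nonneg hr0 n) (ha n)

theorem hasSum_pow_mul_sub_sq_mul_succ {r : ℝ} (hr0 : 0 ≤ r) (hr1 : r < 1) {a : ℕ → ℝ}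
    (ha : ∀ n, |a n| ≤ 1) :
    HasSum (fun n => r ^ (2 * n + 1) * (a n - r ^ 2 * a (n + 1))) (r * a 0) := by
  have hf : Summable fun n => r ^ (2 * n + 1) * a n := by
    have := (summable_pow_mul_of_abs_le_one (sq_nonneg r) (by nlinarith) ha).mul_left r
    refine this.congr fun n => ?_
    ring
  have h := hf.hasSum_sub_succ
  rw [show r ^ (2 * 0 + 1) * a 0 = r * a 0 by ring] at h
  exact h.congr_fun fun n => by ring

namespace ProbabilityTheory.Kernel

variable {α β : Type*} [MeasurableSpace α] [MeasurableSpace β]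

theorem integrable_toReal_apply (κ : Kernel α β) [IsFiniteKernel κ] (μ : Measure α)
    [IsFiniteMeasure μ] {s : Set β} (hs : MeasurableSet s) :
    Integrable (fun a => (κ a s).toReal) μ :=
  ⟨(κ.measurable_coe hs).ennreal_toReal.aestronglyMeasurable,
    HasFiniteIntegral.of_bounded (C := κ.bound.toReal) <| ae_of_all _ fun a => by
      simpa using ENNReal.toReal_mono κ.bound_ne_top (κ.measure_le_bound a s)⟩

theorem integral_toReal_apply (κ : Kernel α β) [IsFiniteKernel κ] (μ : Measure α)
    {s : Set β} (hs : MeasurableSet s) :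
    ∫ a, (κ a s).toReal ∂μ = (∫⁻ a, κ a s ∂μ).toReal :=
  integral_toReal (κ.measurable_coe hs).aemeasurable (ae_of_all _ fun _ => measure_lt_top _ _)

theorem integral_indicator_one_sub_mul_toReal_apply (κ : Kernel α β) [IsFiniteKernel κ]
    (μ : Measure α) [IsFiniteMeasure μ] {s : Set α} (hs : MeasurableSet s) {t : Set β}
    (ht : MeasurableSet t) (c : ℝ) :
    ∫ a, (s.indicator (fun _ => (1 : ℝ)) a - c * (κ a t).toReal) ∂μ
      = μ.real s - c * (∫⁻ a, κ a t ∂μ).toReal := by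
  rw [integral_sub ((integrable_const 1).indicator hs)
      ((κ.integrable_toReal_apply μ ht).const_mul c),
    integral_indicator_const _ hs, integral_const_mul, κ.integral_toReal_apply μ ht]
  simp

end ProbabilityTheory.Kernel

theorem stmt_3_general
    {SX SY : Type*} [MeasurableSpace SX] [MeasurableSpace SY]
    (lam : ℝ) (hlam0 : 0 < lam) (hlam1 : lam < 1)
    (σX0 : ProbabilityTheory.Kernel SY SX) [ProbabilityTheory.IsMarkovKernel σX0]
    (σX : ProbabilityTheory.Kernel (SX × SY) SX) [ProbabilityTheory.IsMarkovKernel σX]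
    (σY0 : Measure SY)
    (ν : ℕ → Measure (SX × SY)) (hν : ∀ t, IsProbabilityMeasure (ν t))
    (hν0 : ∀ E : Set SX, MeasurableSet E →
      ν 0 (E ×ˢ (Set.univ : Set SY)) = ∫⁻ y0, σX0 y0 E ∂σY0)
    (hνsucc : ∀ (t : ℕ) (E : Set SX), MeasurableSet E →
      ν (t + 1) (E ×ˢ (Set.univ : Set SY)) = ∫⁻ q, σX q E ∂(ν t))
    (E : Set SX) (hE : MeasurableSet E) :
    HasSum
      (fun t : ℕ => lam ^ (2 * t + 1) *
        ∫ q, ((E ×ˢ (Set.univ : Set SY)).indicator (fun _ => (1 : ℝ)) q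
          - lam ^ 2 * ((σX q) E).toReal) ∂(ν t))
      (lam * ∫ y0, ((σX0 y0) E).toReal ∂σY0) := by
  have hEY : MeasurableSet (E ×ˢ (Set.univ : Set SY)) := hE.prod MeasurableSet.univ
  set a : ℕ → ℝ := fun t => (ν t).real (E ×ˢ Set.univ)
  have ha : ∀ t, |a t| ≤ 1 := fun t => by
    rw [abs_of_nonneg measureReal_nonneg]
    exact measureReal_le_one
  have hterm : ∀ t, ∫ q, ((E ×ˢ (Set.univ : Set SY)).indicator (fun _ => (1 : ℝ)) q
      - lam ^ 2 * ((σX q) E).toReal) ∂(ν t) = a t - lam ^ 2 * a (t + 1) := fun t => by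
    rw [σX.integral_indicator_one_sub_mul_toReal_apply _ hEY hE, ← hνsucc t E hE]
    rfl
  have ha0 : a 0 = ∫ y0, ((σX0 y0) E).toReal ∂σY0 := by
    rw [σX0.integral_toReal_apply _ hE, ← hν0 E hE]
    rfl
  simpa only [hterm, ha0] using hasSum_pow_mul_sub_sq_mul_succ hlam0.le hlam1 ha

/-- Akin-type lemma for strictly-alternating games in which `Y` moves first:
for any play distribution `ν` consistent with the memory-one strategy
`(σX0[·], σX)` of player `X` and the initial action `σY0` of player `Y`, and
any measurable `E ⊆ S_X`, the series
`∑ λ^{2t+1} ∫ [1_{E×S_Y}(x,y) − λ²·σX[x,y](E)] dν_t` converges to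
`λ ∫ σX0[y₀](E) dσY0(y₀)`. -/
theorem stmt_3
    {SX SY : Type*} [MeasurableSpace SX] [MeasurableSpace SY]
    (lam : ℝ) (hlam0 : 0 < lam) (hlam1 : lam < 1)
    (σX0 : ProbabilityTheory.Kernel SY SX) [ProbabilityTheory.IsMarkovKernel σX0]
    (σX : ProbabilityTheory.Kernel (SX × SY) SX) [ProbabilityTheory.IsMarkovKernel σX]
    (σY0 : Measure SY) [IsProbabilityMeasure σY0]
    (ν : ℕ → Measure (SX × SY)) (hν : ∀ t, IsProbabilityMeasure (ν t))
    (hν0 : ∀ E : Set SX, MeasurableSet E →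
      ν 0 (E ×ˢ (Set.univ : Set SY)) = ∫⁻ y0, σX0 y0 E ∂σY0)
    (hνsucc : ∀ (t : ℕ) (E : Set SX), MeasurableSet E →
      ν (t + 1) (E ×ˢ (Set.univ : Set SY)) = ∫⁻ q, σX q E ∂(ν t))
    (E : Set SX) (hE : MeasurableSet E) :
    HasSum
      (fun t : ℕ => lam ^ (2 * t + 1) *
        ∫ q, ((E ×ˢ (Set.univ : Set SY)).indicator (fun _ => (1 : ℝ)) q
          - lam ^ 2 * ((σX q) E).toReal) ∂(ν t))
      (lam * ∫ y0, ((σX0 y0) E).toReal ∂σY0) :=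
  stmt_3_general lam hlam0 hlam1 σX0 σX σY0 ν hν hν0 hνsucc E hE
end

section
/- Let (ν_t)_{t≥0} be any play distribution consistent with the memory-one strategy (σ_X^0, σ_X) of player X in the randomly-alternating game with move probability ω_X. Then for every bounded measurable function ψ : S_X ⊔ S_Y → ℝ that vanishes on S_Y, the series ∑_{t=0}^∞ λ^t ∫_{S_X ⊔ S_Y} [ψ(s) − λ ω_X ∫_{S_X} ψ(s') dσ_X[s](s')] dν_t(s) converges and equals ω_X ∫_{S_X} ψ(s) dσ_X^0(s). -/
open MeasureTheory
open scoped ProbabilityTheory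

/-- For any play distribution `ν` consistent with the memory-one strategy
`(σX0, σX)` of player `X` in the randomly-alternating game with move
probability `ωX`, and any bounded measurable `ψ : S_X ⊔ S_Y → ℝ` vanishing on
`S_Y`, the series `∑ λ^t ∫ [ψ(s) − λ ωX ∫ ψ dσX[s]] dν_t` converges to
`ωX ∫ ψ dσX0`. -/
theorem stmt_7
    {SX SY : Type*} [MeasurableSpace SX] [MeasurableSpace SY]
    (lam : ℝ) (hlam0 : 0 < lam) (hlam1 : lam < 1)
    (ωX : ℝ) (hω0 : 0 ≤ ωX) (hω1 : ωX ≤ 1)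
    (σX0 : Measure SX) [IsProbabilityMeasure σX0]
    (σX : ProbabilityTheory.Kernel (SX ⊕ SY) SX) [ProbabilityTheory.IsMarkovKernel σX]
    (ν : ℕ → Measure (SX ⊕ SY)) (hν : ∀ t, IsProbabilityMeasure (ν t))
    (hν0 : ∀ E : Set SX, MeasurableSet E →
      ν 0 (Sum.inl '' E) = ENNReal.ofReal ωX * σX0 E)
    (hνsucc : ∀ (t : ℕ) (E : Set SX), MeasurableSet E →
      ν (t + 1) (Sum.inl '' E) = ENNReal.ofReal ωX * ∫⁻ s, σX s E ∂(ν t))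
    (ψ : SX ⊕ SY → ℝ) (hψm : Measurable ψ) (C : ℝ) (hψb : ∀ s, |ψ s| ≤ C)
    (hψY : ∀ y : SY, ψ (Sum.inr y) = 0) :
    HasSum
      (fun t : ℕ => lam ^ t *
        ∫ s, (ψ s - lam * ωX * ∫ s', ψ (Sum.inl s') ∂(σX s)) ∂(ν t))
      (ωX * ∫ s, ψ (Sum.inl s) ∂σX0) := by
  classical
  haveI := hν 0
  -- the ambient type is nonempty, hence `0 ≤ C`
  have hne : Nonempty (SX ⊕ SY) := by
    by_contra h
    rw [not_nonempty_iff] at h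
    have h1 : (ν 0) Set.univ = 1 := measure_univ
    have h0 : (Set.univ : Set (SX ⊕ SY)) = ∅ := Set.univ_eq_empty_iff.mpr h
    rw [h0, measure_empty] at h1
    exact zero_ne_one h1
  obtain ⟨s0⟩ := hne
  have hC : 0 ≤ C := (abs_nonneg _).trans (hψb s0)
  set g : SX ⊕ SY → ℝ := fun s => ∫ s', ψ (Sum.inl s') ∂(σX s) with hg
  -- measurability and boundedness of g
  have hgmeas : StronglyMeasurable g :=
    StronglyMeasurable.integral_kernel_prod_right
      (f := fun (_ : SX ⊕ SY) (x : SX) => ψ (Sum.inl x))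
      (((hψm.comp measurable_inl).comp measurable_snd).stronglyMeasurable)
  have hgbound : ∀ s, |g s| ≤ C := by
    intro s
    have := norm_integral_le_of_norm_le_const
      (μ := σX s) (f := fun s' => ψ (Sum.inl s')) (C := C)
      (Filter.Eventually.of_forall fun s' => by
        rw [Real.norm_eq_abs]; exact hψb _)
    simpa [Real.norm_eq_abs] using this
  -- integrability of bounded measurable functions under probability measures
  have hintP : ∀ {α : Type _} [MeasurableSpace α] (μ : Measure α) [IsProbabilityMeasure μ]
      (f : α → ℝ), AEStronglyMeasurable f μ → (∀ a, |f a| ≤ C) → Integrable f μ := by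
    intro α _ μ _ f hfm hfb
    refine ⟨hfm, ?_⟩
    exact HasFiniteIntegral.of_bounded (C := C)
      (Filter.Eventually.of_forall fun a => by rw [Real.norm_eq_abs]; exact hfb a)
  -- key lemma: integrals of ψ against measures concentrated on `inl`
  have key : ∀ (μ : Measure (SX ⊕ SY)) (ρ : Measure SX),
      (∀ E : Set SX, MeasurableSet E → μ (Sum.inl '' E) = ρ E) →
      ∫ s, ψ s ∂μ = ∫ x, ψ (Sum.inl x) ∂ρ := by
    intro μ ρ h
    have hrestrict : μ.restrict (Set.range Sum.inl) = ρ.map Sum.inl := by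
      ext A hA
      rw [Measure.restrict_apply hA, Measure.map_apply measurable_inl hA]
      have hAi : A ∩ Set.range Sum.inl = Sum.inl '' (Sum.inl ⁻¹' A) := by
        rw [Set.image_preimage_eq_inter_range]
      rw [hAi, h _ (measurable_inl hA)]
    have hψeq : ψ = (Set.range Sum.inl).indicator ψ := by
      funext s
      cases s with
      | inl x => simp [Set.indicator_of_mem]
      | inr y => simp [Set.indicator, hψY y]
    calc ∫ s, ψ s ∂μ = ∫ s, (Set.range Sum.inl).indicator ψ s ∂μ := by rw [← hψeq]
      _ = ∫ s in Set.range Sum.inl, ψ s ∂μ := integral_indicator measurableSet_range_inl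
      _ = ∫ s, ψ s ∂(ρ.map Sum.inl) := by rw [hrestrict]
      _ = ∫ x, ψ (Sum.inl x) ∂ρ :=
          integral_map measurable_inl.aemeasurable hψm.aestronglyMeasurable
  set b : ℕ → ℝ := fun t => ∫ s, ψ s ∂(ν t) with hb
  -- value of b 0
  have hb0 : b 0 = ωX * ∫ x, ψ (Sum.inl x) ∂σX0 := by
    have h0 : ∀ E : Set SX, MeasurableSet E →
        (ν 0) (Sum.inl '' E) = (ENNReal.ofReal ωX • σX0) E := by
      intro E hE
      rw [hν0 E hE, Measure.smul_apply, smul_eq_mul]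
    show ∫ s, ψ s ∂(ν 0) = _
    rw [key (ν 0) _ h0, integral_smul_measure, ENNReal.toReal_ofReal hω0, smul_eq_mul]
  -- recursion for b (t+1)
  have hbsucc : ∀ t, b (t + 1) = ωX * ∫ s, g s ∂(ν t) := by
    intro t
    haveI := hν t
    have h1 : ∀ E : Set SX, MeasurableSet E →
        (ν (t + 1)) (Sum.inl '' E) = (ENNReal.ofReal ωX • (ν t ⊗ₘ σX).snd) E := by
      intro E hE
      rw [hνsucc t E hE, Measure.smul_apply, smul_eq_mul, Measure.snd_apply hE,
        Measure.compProd_apply (measurable_snd hE)]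
      rfl
    show ∫ s, ψ s ∂(ν (t + 1)) = _
    rw [key (ν (t + 1)) _ h1, integral_smul_measure, ENNReal.toReal_ofReal hω0, smul_eq_mul]
    congr 1
    have hintc : Integrable (fun p : (SX ⊕ SY) × SX => ψ (Sum.inl p.2)) (ν t ⊗ₘ σX) :=
      hintP _ _ ((hψm.comp (measurable_inl.comp measurable_snd)).aestronglyMeasurable)
        (fun p => hψb _)
    rw [Measure.snd,
      integral_map (f := fun x => ψ (Sum.inl x)) measurable_snd.aemeasurable
        (hψm.comp measurable_inl).aestronglyMeasurable,
      Measure.integral_compProd hintc]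
  -- the summand telescopes
  have hψint : ∀ t, Integrable ψ (ν t) := fun t => by
    haveI := hν t; exact hintP _ _ hψm.aestronglyMeasurable hψb
  have hgint : ∀ t, Integrable g (ν t) := fun t => by
    haveI := hν t; exact hintP _ _ hgmeas.aestronglyMeasurable hgbound
  have hsummand : ∀ t, lam ^ t * ∫ s, (ψ s - lam * ωX * g s) ∂(ν t)
      = lam ^ t * b t - lam ^ (t + 1) * b (t + 1) := by
    intro t
    rw [integral_sub (hψint t) ((hgint t).const_mul _), integral_const_mul, hbsucc t]
    show lam ^ t * (∫ s, ψ s ∂(ν t) - lam * ωX * _) = lam ^ t * ∫ s, ψ s ∂(ν t) - _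
    ring
  -- summability
  have hsummable : Summable (fun t : ℕ =>
      lam ^ t * ∫ s, (ψ s - lam * ωX * g s) ∂(ν t)) := by
    apply Summable.of_norm_bounded (g := fun t : ℕ => 2 * C * lam ^ t)
    · exact (summable_geometric_of_lt_one hlam0.le hlam1).mul_left _
    · intro t
      haveI := hν t
      have hbd : ∀ s, |ψ s - lam * ωX * g s| ≤ 2 * C := by
        intro s
        calc |ψ s - lam * ωX * g s| ≤ |ψ s| + |lam * ωX * g s| := abs_sub _ _
          _ ≤ C + C := by
            refine add_le_add (hψb s) ?_
            rw [abs_mul]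
            have h1 : |lam * ωX| ≤ 1 := by
              rw [abs_mul, abs_of_pos hlam0, abs_of_nonneg hω0]
              exact mul_le_one₀ hlam1.le hω0 hω1
            calc |lam * ωX| * |g s| ≤ 1 * C :=
                  mul_le_mul h1 (hgbound s) (abs_nonneg _) zero_le_one
              _ = C := one_mul C
          _ = 2 * C := by ring
      have hi := norm_integral_le_of_norm_le_const
        (μ := ν t) (f := fun s => ψ s - lam * ωX * g s) (C := 2 * C)
        (Filter.Eventually.of_forall fun s => by rw [Real.norm_eq_abs]; exact hbd s)
      rw [Real.norm_eq_abs, abs_mul, abs_pow, abs_of_pos hlam0]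
      calc lam ^ t * |∫ s, (ψ s - lam * ωX * g s) ∂(ν t)|
          ≤ lam ^ t * (2 * C) := by
            refine mul_le_mul_of_nonneg_left ?_ (pow_nonneg hlam0.le t)
            simpa [Real.norm_eq_abs] using hi
        _ = 2 * C * lam ^ t := by ring
  -- telescoping proof of HasSum
  rw [Summable.hasSum_iff_tendsto_nat hsummable]
  have hpartial : ∀ n, ∑ i ∈ Finset.range n,
      (lam ^ i * ∫ s, (ψ s - lam * ωX * g s) ∂(ν i))
      = lam ^ 0 * b 0 - lam ^ n * b n := by
    intro n
    calc ∑ i ∈ Finset.range n, (lam ^ i * ∫ s, (ψ s - lam * ωX * g s) ∂(ν i))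
        = ∑ i ∈ Finset.range n, (lam ^ i * b i - lam ^ (i + 1) * b (i + 1)) :=
          Finset.sum_congr rfl fun i _ => hsummand i
      _ = lam ^ 0 * b 0 - lam ^ n * b n :=
          Finset.sum_range_sub' (fun i => lam ^ i * b i) n
  simp only [hpartial, pow_zero, one_mul]
  have htail : Filter.Tendsto (fun n : ℕ => lam ^ n * b n) Filter.atTop (nhds 0) := by
    refine squeeze_zero_norm (f := fun n : ℕ => lam ^ n * b n) (a := fun n : ℕ => C * lam ^ n) (fun n => ?_) ?_
    · show ‖lam ^ n * b n‖ ≤ C * lam ^ n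
      haveI := hν n
      have hbn : |b n| ≤ C := by
        have := norm_integral_le_of_norm_le_const (μ := ν n) (f := ψ) (C := C)
          (Filter.Eventually.of_forall fun s => by rw [Real.norm_eq_abs]; exact hψb s)
        simpa [Real.norm_eq_abs, hb] using this
      rw [Real.norm_eq_abs, abs_mul, abs_pow, abs_of_pos hlam0]
      calc lam ^ n * |b n| ≤ lam ^ n * C :=
            mul_le_mul_of_nonneg_left hbn (pow_nonneg hlam0.le n)
        _ = C * lam ^ n := by ring
    · have := tendsto_pow_atTop_nhds_zero_of_lt_one hlam0.le hlam1
      simpa using this.const_mul C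
  have := Filter.Tendsto.sub (tendsto_const_nhds (x := b 0)) htail
  rw [sub_zero] at this
  rw [← hb0] at *
  convert this using 2
end

section
/- Suppose there exist real constants α, β, γ and a bounded measurable function ψ : S_X → ℝ such that for every x ∈ S_X and y ∈ S_Y: (i) α f_X(x) + β f_Y(x) + γ = ψ(x) − λ ω_X ∫_{S_X} ψ(s) dσ_X^X[x](s) − (1−λ) ω_X ∫_{S_X} ψ(s) dσ_X^0(s), and (ii) α g_X(y) + β g_Y(y) + γ = − λ ω_X ∫_{S_X} ψ(s) dσ_X^Y[y](s) − (1−λ) ω_X ∫_{S_X} ψ(s) dσ_X^0(s). Then for every play distribution (ν_t)_{t≥0} consistent with (σ_X^0, σ_X), the average payoffs π_X := (1−λ) ∑_{t=0}^∞ λ^t ∫_{S_X ⊔ S_Y} u_X(s) dν_t(s) and π_Y := (1−λ) ∑_{t=0}^∞ λ^t ∫_{S_X ⊔ S_Y} u_Y(s) dν_t(s), where u_X equals f_X on S_X and g_X on S_Y, and u_Y equals f_Y on S_X and g_Y on S_Y, satisfy α π_X + β π_Y + γ = 0. In other words, the memory-one strategy (σ_X^0, σ_X^X, σ_X^Y)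 unilaterally enforces α π_X + β π_Y + γ = 0 for every strategy of player Y. -/
/-!
Extend `ψ` by zero to `Ψ` on `S_X ⊔ S_Y` and put `a t := ∫ Ψ dν_t`. The consistency conditions
give `a 0 = ω_X ∫ ψ dσ_X⁰` and `a (t + 1) = ω_X ∫ (∫ ψ dσ_X[s]) dν_t(s)`, so integrating the two
identities against `ν_t` turns the expected single-round payoff into
`α u_X(t) + β u_Y(t) + γ = a t - λ a (t + 1) - (1 - λ) a 0`.
The discounted sum of the right-hand side telescopes to `a 0 - (1 - λ) a 0 ∑ λ^t = 0`.
-/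

open MeasureTheory ProbabilityTheory

section BoundedFunctions

variable {T : Type*} [MeasurableSpace T] {μ : Measure T} {f : T → ℝ} {D : ℝ}

lemma integrable_of_abs_le [IsFiniteMeasure μ] (hf : Measurable f) (hD : ∀ s, |f s| ≤ D) :
    Integrable f μ :=
  .of_bound hf.aestronglyMeasurable D (ae_of_all _ hD)

lemma abs_integral_le_of_abs_le [IsProbabilityMeasure μ] (hD : ∀ s, |f s| ≤ D) :
    |∫ s, f s ∂μ| ≤ D := by
  simpa using norm_integral_le_of_norm_le_const (μ := μ) (f := f) (ae_of_all _ hD)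

lemma integral_affine_combination [IsProbabilityMeasure μ] {g : T → ℝ} (hf : Integrable f μ)
    (hg : Integrable g μ) (a b c : ℝ) :
    ∫ s, (a * f s + b * g s + c) ∂μ = a * ∫ s, f s ∂μ + b * ∫ s, g s ∂μ + c := by
  rw [integral_add (f := fun s => a * f s + b * g s) ((hf.const_mul a).add (hg.const_mul b))
      (integrable_const c), integral_add (hf.const_mul a) (hg.const_mul b),
    integral_const_mul, integral_const_mul, integral_const, probReal_univ, one_smul]

end BoundedFunctions

lemma MeasureTheory.Measure.integral_comp {A B : Type*} [MeasurableSpace A] [MeasurableSpace B]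
    {μ : Measure A} [SFinite μ] {κ : Kernel A B} [IsSFiniteKernel κ] {f : B → ℝ}
    (hf : Integrable f (κ ∘ₘ μ)) : ∫ b, f b ∂(κ ∘ₘ μ) = ∫ a, ∫ b, f b ∂κ a ∂μ := by
  rw [Measure.comp_eq_comp_const_apply] at hf ⊢
  rw [Kernel.integral_comp hf, Kernel.const_apply]

section SumType

variable {SX SY : Type*} [MeasurableSpace SX] [MeasurableSpace SY]

lemma MeasurableEmbedding.inl : MeasurableEmbedding (Sum.inl : SX → SX ⊕ SY) :=
  ⟨Sum.inl_injective, measurable_inl, fun _ hs => hs.inl_image⟩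

lemma integral_sumElim_zero (ν : Measure (SX ⊕ SY)) (ψ : SX → ℝ) :
    ∫ s, Sum.elim ψ 0 s ∂ν = ∫ x, ψ x ∂(ν.comap Sum.inl) := by
  rw [← setIntegral_eq_integral_of_forall_compl_eq_zero (s := Set.range Sum.inl),
    ← MeasurableEmbedding.inl.map_comap, MeasurableEmbedding.inl.integral_map]
  · rfl
  · rintro (x | y) h
    · exact absurd ⟨x, rfl⟩ h
    · rfl

lemma integral_sumElim_zero_of_apply_inl_image {ν : Measure (SX ⊕ SY)} {m : Measure SX}
    {c : ENNReal} (h : ∀ E, MeasurableSet E → ν (Sum.inl '' E) = c * m E) (ψ : SX → ℝ) :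
    ∫ s, Sum.elim ψ 0 s ∂ν = c.toReal * ∫ x, ψ x ∂m := by
  have hcomap : ν.comap Sum.inl = c • m := by
    ext E hE
    rw [MeasurableEmbedding.inl.comap_apply, h E hE, Measure.smul_apply, smul_eq_mul]
  rw [integral_sumElim_zero, hcomap, integral_smul_measure, smul_eq_mul]

end SumType

section DiscountedSums

variable {lam : ℝ}

lemma summable_geometric_mul_of_abs_le (h0 : 0 ≤ lam) (h1 : lam < 1) {c : ℕ → ℝ} {D : ℝ}
    (hc : ∀ t, |c t| ≤ D) : Summable fun t => lam ^ t * c t := by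
  refine .of_norm_bounded ((summable_geometric_of_lt_one h0 h1).mul_right D) fun t => ?_
  rw [Real.norm_eq_abs, abs_mul, abs_pow, abs_of_nonneg h0]
  exact mul_le_mul_of_nonneg_left (hc t) (pow_nonneg h0 t)

lemma tsum_geometric_mul_eq_zero_of_telescoping (h0 : 0 ≤ lam) (h1 : lam < 1)
    {a c : ℕ → ℝ} {D : ℝ} (ha : ∀ t, |a t| ≤ D)
    (hc : ∀ t, c t = a t - lam * a (t + 1) - (1 - lam) * a 0) :
    ∑' t, lam ^ t * c t = 0 := by
  have hs := summable_geometric_mul_of_abs_le h0 h1 ha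
  have hs' := (summable_geometric_mul_of_abs_le h0 h1 fun t => ha (t + 1)).mul_left lam
  have hgeom := (summable_geometric_of_lt_one h0 h1).mul_left ((1 - lam) * a 0)
  have hshift : ∑' t, lam ^ t * a t = a 0 + lam * ∑' t, lam ^ t * a (t + 1) := by
    rw [hs.tsum_eq_zero_add, pow_zero, one_mul, ← tsum_mul_left]
    exact congrArg _ (tsum_congr fun t => by ring)
  have hexp : ∀ t, lam ^ t * c t
      = lam ^ t * a t - lam * (lam ^ t * a (t + 1)) - (1 - lam) * a 0 * lam ^ t := fun t => by
    rw [hc]; ring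
  rw [tsum_congr hexp, (hs.sub hs').tsum_sub hgeom, hs.tsum_sub hs', tsum_mul_left,
    tsum_mul_left, tsum_geometric_of_lt_one h0 h1, hshift]
  field_simp [(sub_pos.2 h1).ne']
  ring

lemma linear_combination_discounted_avg (h0 : 0 ≤ lam) (h1 : lam < 1) {u v : ℕ → ℝ} {D : ℝ}
    (hu : ∀ t, |u t| ≤ D) (hv : ∀ t, |v t| ≤ D) (α β γ : ℝ) :
    α * ((1 - lam) * ∑' t, lam ^ t * u t) + β * ((1 - lam) * ∑' t, lam ^ t * v t) + γ
      = (1 - lam) * ∑' t, lam ^ t * (α * u t + β * v t + γ) := by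
  have hsu := (summable_geometric_mul_of_abs_le h0 h1 hu).mul_left α
  have hsv := (summable_geometric_mul_of_abs_le h0 h1 hv).mul_left β
  have hgeom := (summable_geometric_of_lt_one h0 h1).mul_left γ
  have hexp : ∀ t, lam ^ t * (α * u t + β * v t + γ)
      = α * (lam ^ t * u t) + β * (lam ^ t * v t) + γ * lam ^ t := fun t => by ring
  rw [tsum_congr hexp, (hsu.add hsv).tsum_add hgeom, hsu.tsum_add hsv, tsum_mul_left,
    tsum_mul_left, tsum_mul_left, tsum_geometric_of_lt_one h0 h1]
  field_simp [(sub_pos.2 h1).ne']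

end DiscountedSums

theorem stmt_8_general
    {SX SY : Type*} [MeasurableSpace SX] [MeasurableSpace SY]
    (lam : ℝ) (hlam0 : 0 < lam) (hlam1 : lam < 1)
    (ωX : ℝ) (hω0 : 0 ≤ ωX)
    (fX fY : SX → ℝ) (gX gY : SY → ℝ)
    (hfXm : Measurable fX) (hfYm : Measurable fY)
    (hgXm : Measurable gX) (hgYm : Measurable gY)
    (Cf : ℝ) (hfXb : ∀ x, |fX x| ≤ Cf) (hfYb : ∀ x, |fY x| ≤ Cf)
    (hgXb : ∀ y, |gX y| ≤ Cf) (hgYb : ∀ y, |gY y| ≤ Cf)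
    (σX0 : Measure SX)
    (σX : ProbabilityTheory.Kernel (SX ⊕ SY) SX) [ProbabilityTheory.IsMarkovKernel σX]
    (α β γ : ℝ)
    (ψ : SX → ℝ) (hψm : Measurable ψ) (C : ℝ) (hψb : ∀ s, |ψ s| ≤ C)
    (hidX : ∀ x : SX,
      α * fX x + β * fY x + γ =
        ψ x - lam * ωX * (∫ s, ψ s ∂(σX (Sum.inl x)))
          - (1 - lam) * ωX * (∫ s, ψ s ∂σX0))
    (hidY : ∀ y : SY,
      α * gX y + β * gY y + γ =
        - (lam * ωX * (∫ s, ψ s ∂(σX (Sum.inr y))))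
          - (1 - lam) * ωX * (∫ s, ψ s ∂σX0))
    (ν : ℕ → Measure (SX ⊕ SY)) (hν : ∀ t, IsProbabilityMeasure (ν t))
    (hν0 : ∀ E : Set SX, MeasurableSet E →
      ν 0 (Sum.inl '' E) = ENNReal.ofReal ωX * σX0 E)
    (hνsucc : ∀ (t : ℕ) (E : Set SX), MeasurableSet E →
      ν (t + 1) (Sum.inl '' E) = ENNReal.ofReal ωX * ∫⁻ s, σX s E ∂(ν t)) :
    α * ((1 - lam) * ∑' t : ℕ, lam ^ t * ∫ s, Sum.elim fX gX s ∂(ν t))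
      + β * ((1 - lam) * ∑' t : ℕ, lam ^ t * ∫ s, Sum.elim fY gY s ∂(ν t))
      + γ = 0 := by
  set Ψ : SX ⊕ SY → ℝ := Sum.elim ψ 0
  set I : SX ⊕ SY → ℝ := fun s => ∫ x, ψ x ∂σX s
  set a : ℕ → ℝ := fun t => ∫ s, Ψ s ∂ν t
  have huX : ∀ s, |Sum.elim fX gX s| ≤ Cf := Sum.forall.2 ⟨hfXb, hgXb⟩
  have huY : ∀ s, |Sum.elim fY gY s| ≤ Cf := Sum.forall.2 ⟨hfYb, hgYb⟩
  have hΨb : ∀ s, |Ψ s| ≤ max C 0 :=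
    Sum.forall.2 ⟨fun x => (hψb x).trans (le_max_left _ _), fun _ => by simp [Ψ]⟩
  have hIb : ∀ s, |I s| ≤ C := fun s => abs_integral_le_of_abs_le hψb
  have hIm : Measurable I := (hψm.stronglyMeasurable.integral_kernel (κ := σX)).measurable
  have ha0 : a 0 = ωX * ∫ x, ψ x ∂σX0 := by
    rw [← ENNReal.toReal_ofReal hω0]
    exact integral_sumElim_zero_of_apply_inl_image hν0 ψ
  have hasucc : ∀ t, a (t + 1) = ωX * ∫ s, I s ∂ν t := fun t => by
    rw [← ENNReal.toReal_ofReal hω0, ← Measure.integral_comp (integrable_of_abs_le hψm hψb)]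
    refine integral_sumElim_zero_of_apply_inl_image (fun E hE => ?_) ψ
    rw [hνsucc t E hE, Measure.bind_apply hE σX.aemeasurable]
  have hround : ∀ t, α * (∫ s, Sum.elim fX gX s ∂ν t) + β * (∫ s, Sum.elim fY gY s ∂ν t) + γ
      = a t - lam * a (t + 1) - (1 - lam) * a 0 := fun t => by
    have hpt : ∀ s, α * Sum.elim fX gX s + β * Sum.elim fY gY s + γ
        = 1 * Ψ s + (-(lam * ωX)) * I s + (-((1 - lam) * ωX * ∫ x, ψ x ∂σX0)) := Sum.forall.2
      ⟨fun x => by simp only [Ψ, I, Sum.elim_inl, hidX x]; ring,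
        fun y => by simp only [Ψ, I, Sum.elim_inr, Pi.zero_apply, hidY y]; ring⟩
    rw [← integral_affine_combination (integrable_of_abs_le (hfXm.sumElim hgXm) huX)
        (integrable_of_abs_le (hfYm.sumElim hgYm) huY),
      integral_congr_ae (ae_of_all _ hpt),
      integral_affine_combination (integrable_of_abs_le (hψm.sumElim measurable_zero) hΨb)
        (integrable_of_abs_le hIm hIb), hasucc, ha0]
    ring
  rw [linear_combination_discounted_avg hlam0.le hlam1
      (fun t => abs_integral_le_of_abs_le huX) (fun t => abs_integral_le_of_abs_le huY),
    tsum_geometric_mul_eq_zero_of_telescoping hlam0.le hlam1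
      (fun t => abs_integral_le_of_abs_le hΨb) hround, mul_zero]

/-- Autocratic strategies for randomly-alternating games: if the two
functional identities hold for some bounded measurable `ψ`, then the
memory-one strategy `(σX0, σX^X, σX^Y)` unilaterally enforces
`α π_X + β π_Y + γ = 0` for every strategy of player `Y` (i.e. for every
consistent play distribution). -/
theorem stmt_8
    {SX SY : Type*} [MeasurableSpace SX] [MeasurableSpace SY]
    (lam : ℝ) (hlam0 : 0 < lam) (hlam1 : lam < 1)
    (ωX : ℝ) (hω0 : 0 ≤ ωX) (hω1 : ωX ≤ 1)
    (fX fY : SX → ℝ) (gX gY : SY → ℝ)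
    (hfXm : Measurable fX) (hfYm : Measurable fY)
    (hgXm : Measurable gX) (hgYm : Measurable gY)
    (Cf : ℝ) (hfXb : ∀ x, |fX x| ≤ Cf) (hfYb : ∀ x, |fY x| ≤ Cf)
    (hgXb : ∀ y, |gX y| ≤ Cf) (hgYb : ∀ y, |gY y| ≤ Cf)
    (σX0 : Measure SX) [IsProbabilityMeasure σX0]
    (σX : ProbabilityTheory.Kernel (SX ⊕ SY) SX) [ProbabilityTheory.IsMarkovKernel σX]
    (α β γ : ℝ)
    (ψ : SX → ℝ) (hψm : Measurable ψ) (C : ℝ) (hψb : ∀ s, |ψ s| ≤ C)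
    (hidX : ∀ x : SX,
      α * fX x + β * fY x + γ =
        ψ x - lam * ωX * (∫ s, ψ s ∂(σX (Sum.inl x)))
          - (1 - lam) * ωX * (∫ s, ψ s ∂σX0))
    (hidY : ∀ y : SY,
      α * gX y + β * gY y + γ =
        - (lam * ωX * (∫ s, ψ s ∂(σX (Sum.inr y))))
          - (1 - lam) * ωX * (∫ s, ψ s ∂σX0))
    (ν : ℕ → Measure (SX ⊕ SY)) (hν : ∀ t, IsProbabilityMeasure (ν t))
    (hν0 : ∀ E : Set SX, MeasurableSet E →
      ν 0 (Sum.inl '' E) = ENNReal.ofReal ωX * σX0 E)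
    (hνsucc : ∀ (t : ℕ) (E : Set SX), MeasurableSet E →
      ν (t + 1) (Sum.inl '' E) = ENNReal.ofReal ωX * ∫⁻ s, σX s E ∂(ν t)) :
    α * ((1 - lam) * ∑' t : ℕ, lam ^ t * ∫ s, Sum.elim fX gX s ∂(ν t))
      + β * ((1 - lam) * ∑' t : ℕ, lam ^ t * ∫ s, Sum.elim fY gY s ∂(ν t))
      + γ = 0 :=
  stmt_8_general lam hlam0 hlam1 ωX hω0 fX fY gX gY hfXm hfYm hgXm hgYm Cf hfXb hfYb hgXb hgYb σX0
    σX α β γ ψ hψm C hψb hidX hidY ν hν hν0 hνsucc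
end

section
/- Let b > c > 0, χ ≥ 1, and 0 ≤ ω_X ≤ 1. There exists a real number φ with (1−ω_X)/(χb+c) ≤ φ ≤ min{ ω_X/(b+χc), 1/(χb+c) } if and only if ω_X ≥ (b+χc)/((χ+1)(b+c)). -/
/-- Existence condition for the normalization factor `φ` of the extortionate
memory-one strategy in the undiscounted, randomly-alternating classical
Donation Game: such a `φ` exists iff
`ωX ≥ (b + χc)/((χ+1)(b+c))`. -/
theorem stmt_9
    (b c χ ωX : ℝ) (hc : 0 < c) (hb : c < b) (hχ : 1 ≤ χ)
    (hω0 : 0 ≤ ωX) (hω1 : ωX ≤ 1) :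
    (∃ φ : ℝ, (1 - ωX) / (χ * b + c) ≤ φ ∧
        φ ≤ min (ωX / (b + χ * c)) (1 / (χ * b + c))) ↔
      (b + χ * c) / ((χ + 1) * (b + c)) ≤ ωX := by
  have h1 : (0:ℝ) < χ * b + c := by nlinarith
  have h2 : (0:ℝ) < b + χ * c := by nlinarith
  have h3 : (0:ℝ) < (χ + 1) * (b + c) := by nlinarith
  constructor
  · rintro ⟨φ, hl, hr⟩
    have key : (1 - ωX) / (χ * b + c) ≤ ωX / (b + χ * c) :=
      le_trans hl (le_trans hr (min_le_left _ _))
    rw [div_le_div_iff₀ h1 h2] at key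
    rw [div_le_iff₀ h3]
    nlinarith
  · intro h
    rw [div_le_iff₀ h3] at h
    refine ⟨(1 - ωX) / (χ * b + c), le_refl _, le_min ?_ ?_⟩
    · rw [div_le_div_iff₀ h1 h2]; nlinarith
    · gcongr
      linarith
end

section
/- Let 0 < λ < 1, 0 ≤ ω_X ≤ 1, and γ ∈ ℝ. Suppose there exist a bounded measurable function ψ : [0,K] → ℝ, a probability measure σ_X^0 on [0,K], and Markov kernels σ_X^X and σ_X^Y from [0,K] to probability measures on [0,K] such that for all x, y ∈ [0,K]: (i) −c(x) − γ = ψ(x) − λ ω_X ∫ ψ dσ_X^X[x] − (1−λ) ω_X ∫ ψ dσ_X^0, and (ii) b(y) − γ = − λ ω_X ∫ ψ dσ_X^Y[y] − (1−λ) ω_X ∫ ψ dσ_X^0. Then γ ≤ 0. In other words, in the randomly-alternating continuous Donation Game, player X cannot use an autocratic strategy to set her own score π_X = γ to any positive value. -/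
open MeasureTheory

/-- In the randomly-alternating continuous Donation Game, player `X` cannot
use an autocratic strategy to set her own score `π_X = γ` to any positive
value: the conditions of the autocratic-strategy theorem for enforcing
`π_X = γ` force `γ ≤ 0`. -/
theorem stmt_10
    (K : ℝ) (hK : 0 < K) (b c : ℝ → ℝ)
    (hbC : ContinuousOn b (Set.Icc 0 K)) (hcC : ContinuousOn c (Set.Icc 0 K))
    (hbM : MonotoneOn b (Set.Icc 0 K)) (hcM : MonotoneOn c (Set.Icc 0 K))
    (hb0 : b 0 = 0) (hc0 : c 0 = 0)
    (hcb : ∀ s ∈ Set.Ioc (0 : ℝ) K, c s < b s)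
    (hcpos : ∀ s ∈ Set.Ioc (0 : ℝ) K, 0 < c s)
    (lam : ℝ) (hlam0 : 0 < lam) (hlam1 : lam < 1)
    (ωX : ℝ) (hω0 : 0 ≤ ωX) (hω1 : ωX ≤ 1)
    (γ : ℝ)
    (ψ : Set.Icc (0 : ℝ) K → ℝ) (hψm : Measurable ψ) (C : ℝ) (hψb : ∀ s, |ψ s| ≤ C)
    (σX0 : Measure (Set.Icc (0 : ℝ) K)) (hσX0 : IsProbabilityMeasure σX0)
    (σXX σXY : ProbabilityTheory.Kernel (Set.Icc (0 : ℝ) K) (Set.Icc (0 : ℝ) K))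
    (hσXX : ProbabilityTheory.IsMarkovKernel σXX)
    (hσXY : ProbabilityTheory.IsMarkovKernel σXY)
    (hidX : ∀ x : Set.Icc (0 : ℝ) K,
      -(c ↑x) - γ =
        ψ x - lam * ωX * (∫ s, ψ s ∂(σXX x))
          - (1 - lam) * ωX * (∫ s, ψ s ∂σX0))
    (hidY : ∀ y : Set.Icc (0 : ℝ) K,
      b ↑y - γ =
        -(lam * ωX * (∫ s, ψ s ∂(σXY y)))
          - (1 - lam) * ωX * (∫ s, ψ s ∂σX0)) :
    γ ≤ 0 := by

  have h0X : (0:ℝ) ∈ Set.Icc (0:ℝ) K := ⟨le_refl 0, hK.le⟩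
  set z : Set.Icc (0:ℝ) K := ⟨0, h0X⟩ with hz
  set S := sSup (Set.range ψ) with hS
  have hbdd : BddAbove (Set.range ψ) := by
    refine ⟨C, ?_⟩
    rintro r ⟨s, rfl⟩
    exact (abs_le.1 (hψb s)).2
  have hle : ∀ s, ψ s ≤ S := fun s => le_csSup hbdd ⟨s, rfl⟩
  have key : ∀ (μ : Measure (Set.Icc (0:ℝ) K)), IsProbabilityMeasure μ →
      (∫ s, ψ s ∂μ) ≤ S := by
    intro μ hμ
    have hInt : Integrable ψ μ := by
      refine ⟨hψm.aestronglyMeasurable, ?_⟩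
      exact HasFiniteIntegral.of_bounded (C := C) (ae_of_all _ fun s => by
        simpa [Real.norm_eq_abs] using hψb s)
    calc ∫ s, ψ s ∂μ ≤ ∫ _, S ∂μ := integral_mono hInt (integrable_const S) hle
      _ = S := by simp
  have hI0 : (∫ s, ψ s ∂σX0) ≤ S := key _ hσX0
  have hSbound : S ≤ -γ + ωX * S := by
    refine csSup_le ⟨ψ z, z, rfl⟩ ?_
    rintro r ⟨x, rfl⟩
    have hA : (∫ s, ψ s ∂(σXX x)) ≤ S := key _ (hσXX.isProbabilityMeasure x)
    have hcx : 0 ≤ c ↑x := by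
      have := hcM h0X x.2 x.2.1
      linarith [hc0 ▸ this]
    have hid := hidX x
    have h1 : lam * ωX * (∫ s, ψ s ∂(σXX x)) ≤ lam * ωX * S :=
      mul_le_mul_of_nonneg_left hA (by positivity)
    have h2 : (1 - lam) * ωX * (∫ s, ψ s ∂σX0) ≤ (1 - lam) * ωX * S :=
      mul_le_mul_of_nonneg_left hI0 (mul_nonneg (by linarith) hω0)
    nlinarith
  have hγ : γ ≤ ωX * S := by
    have hid := hidY z
    have hB : (∫ s, ψ s ∂(σXY z)) ≤ S := key _ (hσXY.isProbabilityMeasure z)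
    have h1 : lam * ωX * (∫ s, ψ s ∂(σXY z)) ≤ lam * ωX * S :=
      mul_le_mul_of_nonneg_left hB (by positivity)
    have h2 : (1 - lam) * ωX * (∫ s, ψ s ∂σX0) ≤ (1 - lam) * ωX * S :=
      mul_le_mul_of_nonneg_left hI0 (mul_nonneg (by linarith) hω0)
    simp only [hz] at hid
    rw [hb0] at hid
    nlinarith
  nlinarith [mul_le_mul_of_nonneg_left hγ hω0, mul_le_mul_of_nonneg_right hSbound hω0]
end

section
/- Let 0 < λ < 1, 0 ≤ ω_X ≤ 1, and γ ∈ ℝ. Suppose there exist a bounded measurable function ψ : [0,K] → ℝ, a probability measure σ_X^0 on [0,K], and Markov kernels σ_X^X and σ_X^Y from [0,K] to probability measures on [0,K] such that for all x, y ∈ [0,K]: (i) b(x) − γ = ψ(x) − λ ω_X ∫ ψ dσ_X^X[x] − (1−λ) ω_X ∫ ψ dσ_X^0, and (ii) −c(y) − γ = − λ ω_X ∫ ψ dσ_X^Y[y] − (1−λ) ω_X ∫ ψ dσ_X^0. Then 0 ≤ γ ≤ ω_X b(K) − (1−ω_X) c(K). In other words, in the randomly-alternating continuous Donation Game, an equalizer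 strategy can set the opponent's score π_Y = γ only for γ between the mutual-defection payoff 0 and the mutual full-cooperation payoff κ_Y^{KK} = ω_X b(K) − (1−ω_X) c(K). -/
open MeasureTheory

lemma stmt_11_aux1 (w m g : ℝ) (hw0 : 0 ≤ w) (hw1 : w ≤ 1)
    (h1 : w * m ≤ g) (h2 : -g ≤ (1 - w) * m) : 0 ≤ g := by nlinarith

lemma stmt_11_aux2 (w M g bK cK : ℝ) (hw0 : 0 ≤ w) (hw1 : w ≤ 1)
    (h1 : g ≤ -cK + w * M) (h2 : (1 - w) * M ≤ bK - g) :
    g ≤ w * bK - (1 - w) * cK := by nlinarith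

set_option maxHeartbeats 1000000

/-- In the randomly-alternating continuous Donation Game, an equalizer
strategy can set the opponent's score `π_Y = γ` only for `γ` between the
mutual-defection payoff `0` and the mutual full-cooperation payoff
`κ_Y^{KK} = ωX b(K) − (1−ωX) c(K)`. -/
theorem stmt_11
    (K : ℝ) (hK : 0 < K) (b c : ℝ → ℝ)
    (hbC : ContinuousOn b (Set.Icc 0 K)) (hcC : ContinuousOn c (Set.Icc 0 K))
    (hbM : MonotoneOn b (Set.Icc 0 K)) (hcM : MonotoneOn c (Set.Icc 0 K))
    (hb0 : b 0 = 0) (hc0 : c 0 = 0)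
    (hcb : ∀ s ∈ Set.Ioc (0 : ℝ) K, c s < b s)
    (hcpos : ∀ s ∈ Set.Ioc (0 : ℝ) K, 0 < c s)
    (lam : ℝ) (hlam0 : 0 < lam) (hlam1 : lam < 1)
    (ωX : ℝ) (hω0 : 0 ≤ ωX) (hω1 : ωX ≤ 1)
    (γ : ℝ)
    (ψ : Set.Icc (0 : ℝ) K → ℝ) (hψm : Measurable ψ) (C : ℝ) (hψb : ∀ s, |ψ s| ≤ C)
    (σX0 : Measure (Set.Icc (0 : ℝ) K)) (hσX0 : IsProbabilityMeasure σX0)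
    (σXX σXY : ProbabilityTheory.Kernel (Set.Icc (0 : ℝ) K) (Set.Icc (0 : ℝ) K))
    (hσXX : ProbabilityTheory.IsMarkovKernel σXX)
    (hσXY : ProbabilityTheory.IsMarkovKernel σXY)
    (hidX : ∀ x : Set.Icc (0 : ℝ) K,
      b ↑x - γ =
        ψ x - lam * ωX * (∫ s, ψ s ∂(σXX x))
          - (1 - lam) * ωX * (∫ s, ψ s ∂σX0))
    (hidY : ∀ y : Set.Icc (0 : ℝ) K,
      -(c ↑y) - γ =
        -(lam * ωX * (∫ s, ψ s ∂(σXY y)))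
          - (1 - lam) * ωX * (∫ s, ψ s ∂σX0)) :
    0 ≤ γ ∧ γ ≤ ωX * b K - (1 - ωX) * c K := by
  haveI := hσX0
  haveI := hσXX
  haveI := hσXY
  have h0mem : (0 : ℝ) ∈ Set.Icc (0 : ℝ) K := ⟨le_refl 0, hK.le⟩
  have hKmem : K ∈ Set.Icc (0 : ℝ) K := ⟨hK.le, le_refl K⟩
  set z0 : Set.Icc (0 : ℝ) K := ⟨0, h0mem⟩ with hz0
  set zK : Set.Icc (0 : ℝ) K := ⟨K, hKmem⟩ with hzK
  -- sup and inf of ψ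
  have hne : (Set.range ψ).Nonempty := ⟨ψ z0, ⟨z0, rfl⟩⟩
  have hbddA : BddAbove (Set.range ψ) := ⟨C, by rintro _ ⟨s, rfl⟩; exact (abs_le.mp (hψb s)).2⟩
  have hbddB : BddBelow (Set.range ψ) := ⟨-C, by rintro _ ⟨s, rfl⟩; exact (abs_le.mp (hψb s)).1⟩
  set m : ℝ := sInf (Set.range ψ) with hm
  set M : ℝ := sSup (Set.range ψ) with hM
  have hmle : ∀ s, m ≤ ψ s := fun s => csInf_le hbddB ⟨s, rfl⟩
  have hleM : ∀ s, ψ s ≤ M := fun s => le_csSup hbddA ⟨s, rfl⟩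
  -- integral bounds for any probability measure
  have key : ∀ (μ : Measure (Set.Icc (0 : ℝ) K)) [IsProbabilityMeasure μ],
      m ≤ (∫ s, ψ s ∂μ) ∧ (∫ s, ψ s ∂μ) ≤ M := by
    intro μ hμ
    have hint : Integrable ψ μ := by
      refine ⟨hψm.aestronglyMeasurable, ?_⟩
      exact HasFiniteIntegral.of_bounded (C := C)
        (Filter.Eventually.of_forall fun s => by simpa [Real.norm_eq_abs] using hψb s)
    constructor
    · have := integral_mono (integrable_const m) hint (fun s => hmle s)
      simpa [integral_const] using this
    · have := integral_mono hint (integrable_const M) (fun s => hleM s)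
      simpa [integral_const] using this
  -- facts on b
  have hbK0 : 0 ≤ b K := by
    have := hbM h0mem hKmem hK.le
    linarith [this, hb0.ge, hb0.le]
  have hbx0 : ∀ x : Set.Icc (0 : ℝ) K, 0 ≤ b ↑x := by
    intro x
    have := hbM h0mem x.2 x.2.1
    linarith [hb0.le]
  have hbxK : ∀ x : Set.Icc (0 : ℝ) K, b ↑x ≤ b K := fun x => hbM x.2 hKmem x.2.2
  have hI0 := key σX0
  set D : ℝ := (1 - lam) * ωX * (∫ s, ψ s ∂σX0) with hD
  have hcoef1 : 0 ≤ lam * ωX := mul_nonneg hlam0.le hω0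
  have hcoef2 : 0 ≤ (1 - lam) * ωX := mul_nonneg (by linarith) hω0
  have hDlow : (1 - lam) * ωX * m ≤ D := mul_le_mul_of_nonneg_left hI0.1 hcoef2
  have hDhigh : D ≤ (1 - lam) * ωX * M := mul_le_mul_of_nonneg_left hI0.2 hcoef2
  -- pointwise bounds on ψ from (i)
  have hψlow : ∀ x : Set.Icc (0 : ℝ) K, -γ + lam * ωX * m + D ≤ ψ x := by
    intro x
    have hid := hidX x
    have hIx := (key (σXX x)).1
    have h1 : lam * ωX * m ≤ lam * ωX * (∫ s, ψ s ∂(σXX x)) :=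
      mul_le_mul_of_nonneg_left hIx hcoef1
    have hb := hbx0 x
    nlinarith [hid]
  have hψhigh : ∀ x : Set.Icc (0 : ℝ) K, ψ x ≤ b K - γ + lam * ωX * M + D := by
    intro x
    have hid := hidX x
    have hIx := (key (σXX x)).2
    have h1 : lam * ωX * (∫ s, ψ s ∂(σXX x)) ≤ lam * ωX * M :=
      mul_le_mul_of_nonneg_left hIx hcoef1
    have hb := hbxK x
    nlinarith [hid]
  -- inf and sup inequalities
  have hmlow : -γ + lam * ωX * m + D ≤ m :=
    le_csInf hne (by rintro _ ⟨s, rfl⟩; exact hψlow s)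
  have hMhigh : M ≤ b K - γ + lam * ωX * M + D :=
    csSup_le hne (by rintro _ ⟨s, rfl⟩; exact hψhigh s)
  -- from (ii) at y = 0 and y = K
  have hid0 := hidY z0
  have hidK := hidY zK
  have hJ0 := (key (σXY z0)).1
  have hJK := (key (σXY zK)).2
  have hγlow : lam * ωX * m + D ≤ γ := by
    have h1 : lam * ωX * m ≤ lam * ωX * (∫ s, ψ s ∂(σXY z0)) :=
      mul_le_mul_of_nonneg_left hJ0 hcoef1
    have hc : c (↑z0) = 0 := by simpa [hz0] using hc0
    nlinarith [hid0]
  have hγhigh : γ ≤ -c K + lam * ωX * M + D := by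
    have h1 : lam * ωX * (∫ s, ψ s ∂(σXY zK)) ≤ lam * ωX * M :=
      mul_le_mul_of_nonneg_left hJK hcoef1
    nlinarith [hidK]
  -- combine
  have hγm : ωX * m ≤ γ := by nlinarith
  have hγM : γ ≤ -c K + ωX * M := by nlinarith
  have hmγ : -γ ≤ (1 - ωX) * m := by nlinarith
  have hMγ : (1 - ωX) * M ≤ b K - γ := by nlinarith
  exact ⟨stmt_11_aux1 ωX m γ hω0 hω1 hγm hmγ,
    stmt_11_aux2 ωX M γ (b K) (c K) hω0 hω1 hγM hMγ⟩
end

section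
/- Let 0 < λ < 1, 0 ≤ ω_X ≤ 1, χ ≥ 1, and γ ∈ ℝ. Suppose there exist a bounded measurable function ψ : [0,K] → ℝ, a probability measure σ_X^0 on [0,K], and Markov kernels σ_X^X and σ_X^Y from [0,K] to probability measures on [0,K] such that for all x, y ∈ [0,K]: (i) −c(x) − χ b(x) + γ = ψ(x) − λ ω_X ∫ ψ dσ_X^X[x] − (1−λ) ω_X ∫ ψ dσ_X^0, and (ii) b(y) + χ c(y) + γ = − λ ω_X ∫ ψ dσ_X^Y[y] − (1−λ) ω_X ∫ ψ dσ_X^0. Then 0 ≤ γ ≤ χ (ω_X b(K) − (1−ω_X) c(K)) − ((1−ω_X) b(K) − ω_X c(K)). Equivalently, writing γ = χκ_Y − κ_X, the baseline payoffs must satisfy κ_X + (χκ_Y^{00} − κ_X^{00}) ≤ χκ_Y ≤ κ_X + (χκ_Y^{KK} − κ_X^{KK}), where κ_X^{00} = κ_Y^{00} = 0, κ_X^{KK} = (1−ω_X) b(K) − ω_X c(K), and κ_Y^{KK} = ω_X b(K) − (1−ω_X) c(K). -/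
open MeasureTheory

/-- In the randomly-alternating continuous Donation Game, if player `X` can
enforce `π_X = χ π_Y − γ` via the autocratic-strategy conditions, then
`0 ≤ γ ≤ χ κ_Y^{KK} − κ_X^{KK}`, where `κ_X^{KK} = (1−ωX) b(K) − ωX c(K)` and
`κ_Y^{KK} = ωX b(K) − (1−ωX) c(K)`; equivalently, writing `γ = χκ_Y − κ_X`,
the baseline payoffs satisfy `κ_X ≤ χκ_Y ≤ κ_X + (χκ_Y^{KK} − κ_X^{KK})`. -/
theorem stmt_12
    (K : ℝ) (hK : 0 < K) (b c : ℝ → ℝ)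
    (hbC : ContinuousOn b (Set.Icc 0 K)) (hcC : ContinuousOn c (Set.Icc 0 K))
    (hbM : MonotoneOn b (Set.Icc 0 K)) (hcM : MonotoneOn c (Set.Icc 0 K))
    (hb0 : b 0 = 0) (hc0 : c 0 = 0)
    (hcb : ∀ s ∈ Set.Ioc (0 : ℝ) K, c s < b s)
    (hcpos : ∀ s ∈ Set.Ioc (0 : ℝ) K, 0 < c s)
    (lam : ℝ) (hlam0 : 0 < lam) (hlam1 : lam < 1)
    (ωX : ℝ) (hω0 : 0 ≤ ωX) (hω1 : ωX ≤ 1)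
    (χ : ℝ) (hχ : 1 ≤ χ) (γ : ℝ)
    (ψ : Set.Icc (0 : ℝ) K → ℝ) (hψm : Measurable ψ) (C : ℝ) (hψb : ∀ s, |ψ s| ≤ C)
    (σX0 : Measure (Set.Icc (0 : ℝ) K)) (hσX0 : IsProbabilityMeasure σX0)
    (σXX σXY : ProbabilityTheory.Kernel (Set.Icc (0 : ℝ) K) (Set.Icc (0 : ℝ) K))
    (hσXX : ProbabilityTheory.IsMarkovKernel σXX)
    (hσXY : ProbabilityTheory.IsMarkovKernel σXY)
    (hidX : ∀ x : Set.Icc (0 : ℝ) K,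
      -(c ↑x) - χ * b ↑x + γ =
        ψ x - lam * ωX * (∫ s, ψ s ∂(σXX x))
          - (1 - lam) * ωX * (∫ s, ψ s ∂σX0))
    (hidY : ∀ y : Set.Icc (0 : ℝ) K,
      b ↑y + χ * c ↑y + γ =
        -(lam * ωX * (∫ s, ψ s ∂(σXY y)))
          - (1 - lam) * ωX * (∫ s, ψ s ∂σX0)) :
    0 ≤ γ ∧
      γ ≤ χ * (ωX * b K - (1 - ωX) * c K) - ((1 - ωX) * b K - ωX * c K) := by
  classical
  haveI := hσXX
  haveI := hσXY
  set M := sSup (Set.range ψ) with hM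
  set m := sInf (Set.range ψ) with hm
  have hz0 : (0 : ℝ) ∈ Set.Icc (0 : ℝ) K := ⟨le_refl _, hK.le⟩
  have hzK : K ∈ Set.Icc (0 : ℝ) K := ⟨hK.le, le_refl _⟩
  set z0 : Set.Icc (0 : ℝ) K := ⟨0, hz0⟩
  set zK : Set.Icc (0 : ℝ) K := ⟨K, hzK⟩
  have hne : (Set.range ψ).Nonempty := ⟨ψ z0, Set.mem_range_self _⟩
  have hbdd : BddAbove (Set.range ψ) := ⟨C, by rintro _ ⟨s, rfl⟩; exact (abs_le.1 (hψb s)).2⟩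
  have hbddb : BddBelow (Set.range ψ) := ⟨-C, by rintro _ ⟨s, rfl⟩; exact (abs_le.1 (hψb s)).1⟩
  have hle : ∀ s, ψ s ≤ M := fun s => le_csSup hbdd ⟨s, rfl⟩
  have hge : ∀ s, m ≤ ψ s := fun s => csInf_le hbddb ⟨s, rfl⟩
  have hint : ∀ (μ : Measure (Set.Icc (0 : ℝ) K)), IsProbabilityMeasure μ →
      m ≤ (∫ s, ψ s ∂μ) ∧ (∫ s, ψ s ∂μ) ≤ M := by
    intro μ hμ
    have hInt : Integrable ψ μ := by
      apply Integrable.mono' (integrable_const C) hψm.aestronglyMeasurable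
      filter_upwards with a
      simpa using hψb a
    constructor
    · have := integral_mono (integrable_const m) hInt hge
      simpa using this
    · have := integral_mono hInt (integrable_const M) hle
      simpa using this
  -- nonnegativity and monotone bounds for b, c
  have hc_nonneg : ∀ x : Set.Icc (0 : ℝ) K, 0 ≤ c ↑x := by
    rintro ⟨x, hx0, hxK⟩
    rcases eq_or_lt_of_le hx0 with h | h
    · simp [← h, hc0]
    · exact (hcpos x ⟨h, hxK⟩).le
  have hb_nonneg : ∀ x : Set.Icc (0 : ℝ) K, 0 ≤ b ↑x := by
    rintro ⟨x, hx0, hxK⟩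
    rcases eq_or_lt_of_le hx0 with h | h
    · simp [← h, hb0]
    · exact ((hcpos x ⟨h, hxK⟩).trans (hcb x ⟨h, hxK⟩)).le
  have hcK : ∀ x : Set.Icc (0 : ℝ) K, c ↑x ≤ c K := fun x => hcM x.2 hzK x.2.2
  have hbK : ∀ x : Set.Icc (0 : ℝ) K, b ↑x ≤ b K := fun x => hbM x.2 hzK x.2.2
  have hχ0 : (0 : ℝ) ≤ χ := by linarith
  have hlω : (0 : ℝ) ≤ lam * ωX := mul_nonneg hlam0.le hω0
  have hlω' : (0 : ℝ) ≤ (1 - lam) * ωX := mul_nonneg (by linarith) hω0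
  have hI0m := (hint σX0 hσX0).1
  have hI0M := (hint σX0 hσX0).2
  -- E1 : M ≤ γ + ωX * M
  have E1 : M ≤ γ + ωX * M := by
    apply csSup_le hne
    rintro _ ⟨x, rfl⟩
    have hid := hidX x
    have hAM := (hint (σXX x) inferInstance).2
    have p1 : lam * ωX * (∫ s, ψ s ∂(σXX x)) ≤ lam * ωX * M :=
      mul_le_mul_of_nonneg_left hAM hlω
    have p2 : (1 - lam) * ωX * (∫ s, ψ s ∂σX0) ≤ (1 - lam) * ωX * M :=
      mul_le_mul_of_nonneg_left hI0M hlω'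
    have hb' : 0 ≤ χ * b ↑x := mul_nonneg hχ0 (hb_nonneg x)
    nlinarith [hc_nonneg x]
  -- E3 : γ - c K - χ * b K + ωX * m ≤ m
  have E3 : γ - c K - χ * b K + ωX * m ≤ m := by
    apply le_csInf hne
    rintro _ ⟨x, rfl⟩
    have hid := hidX x
    have hAm := (hint (σXX x) inferInstance).1
    have p1 : lam * ωX * m ≤ lam * ωX * (∫ s, ψ s ∂(σXX x)) :=
      mul_le_mul_of_nonneg_left hAm hlω
    have p2 : (1 - lam) * ωX * m ≤ (1 - lam) * ωX * (∫ s, ψ s ∂σX0) :=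
      mul_le_mul_of_nonneg_left hI0m hlω'
    have hb' : χ * b ↑x ≤ χ * b K := mul_le_mul_of_nonneg_left (hbK x) hχ0
    nlinarith [hcK x]
  -- E2 : -ωX * M ≤ γ  (from hidY at 0)
  have E2 : -(ωX * M) ≤ γ := by
    have hid := hidY z0
    simp only [z0] at hid
    rw [hb0, hc0] at hid
    have hBM := (hint (σXY z0) inferInstance).2
    have p1 : lam * ωX * (∫ s, ψ s ∂(σXY z0)) ≤ lam * ωX * M :=
      mul_le_mul_of_nonneg_left hBM hlω
    have p2 : (1 - lam) * ωX * (∫ s, ψ s ∂σX0) ≤ (1 - lam) * ωX * M :=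
      mul_le_mul_of_nonneg_left hI0M hlω'
    nlinarith
  -- E4 : b K + χ * c K + γ ≤ -(ωX * m)  (from hidY at K)
  have E4 : b K + χ * c K + γ ≤ -(ωX * m) := by
    have hid := hidY zK
    simp only [zK] at hid
    have hBm := (hint (σXY zK) inferInstance).1
    have p1 : lam * ωX * m ≤ lam * ωX * (∫ s, ψ s ∂(σXY zK)) :=
      mul_le_mul_of_nonneg_left hBm hlω
    have p2 : (1 - lam) * ωX * m ≤ (1 - lam) * ωX * (∫ s, ψ s ∂σX0) :=
      mul_le_mul_of_nonneg_left hI0m hlω'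
    nlinarith
  constructor
  · nlinarith [mul_le_mul_of_nonneg_left E1 hω0,
      mul_le_mul_of_nonneg_left E2 (by linarith : (0:ℝ) ≤ 1 - ωX)]
  · nlinarith [mul_le_mul_of_nonneg_left E3 hω0,
      mul_le_mul_of_nonneg_left E4 (by linarith : (0:ℝ) ≤ 1 - ωX)]
end

section
/- Let 0 < λ < 1, χ ≥ 1, and suppose λ ≥ (b(K) + χ c(K)) / (χ b(K) + c(K)). Let κ_X^{KK} = (b(K) − λ c(K))/(1+λ) and κ_Y^{KK} = (λ b(K) − c(K))/(1+λ), and let κ_X, κ_Y ∈ ℝ satisfy κ_X ≤ χκ_Y ≤ κ_X + (χκ_Y^{KK} − κ_X^{KK}); set γ := χκ_Y − κ_X. Define p(y) := (b(y) + χ c(y) + (1+λ)γ)/(λ(χ b(K) + c(K))) for y ∈ [0,K]. Then 0 ≤ p(y) ≤ 1 for all y ∈ [0,K], and the reactive two-point strategy σ_X^0[y_0] = p(y_0) δ_K + (1−p(y_0)) δ_0, σ_X[x,y] = p(y) δ_K + (1−p(y)) δ_0 satisfies, with ψ(s) := −χ b(s) − c(s) + γ, the identity (−c(x) − χ b(x)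 + γ) + λ(b(y) + χ c(y) + γ) + ((1−λ²)/λ)(b(y_0) + χ c(y_0) + γ) = ψ(x) − λ² ∫ ψ dσ_X[x,y] − (1−λ²) ∫ ψ dσ_X^0[y_0] for all x, y, y_0 ∈ [0,K]. Consequently, in the strictly-alternating continuous Donation Game in which Y moves first, this strategy unilaterally enforces π_X − κ_X = χ(π_Y − κ_Y). -/
/-!
`X` answers `Y`'s move `y` with `K` with probability `p y`, which is affine in `b y + χ c y`,
and with `0` otherwise. So if `W t` is the mean of `b + χ c` at the move of `Y` that `X` answers
in round `t`, then `ψ = -χ b - c + γ` has mean `γ - (W t + (1 + λ) γ) / λ` at `X`'s move, and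
the round-`t` payoff combination `u_X - χ u_Y` has mean `λ W (t + 1) - (W t + (1 + λ) γ) / λ`.
Discounted by `λ ^ (2 t + 1)` these terms telescope; the sum is `-W 0 - γ / (1 - λ)`, whose
first term cancels `Y`'s opening move, leaving `π_X - χ π_Y = -γ = κ_X - χ κ_Y`. The autocratic
identity is the same one-round computation.
-/

open MeasureTheory Set

noncomputable def twoPointMeasure {α : Type*} [MeasurableSpace α] (a : ℝ) (x₁ x₀ : α) :
    Measure α :=
  ENNReal.ofReal a • Measure.dirac x₁ + ENNReal.ofReal (1 - a) • Measure.dirac x₀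

section TwoPointMeasure

variable {α β : Type*} [MeasurableSpace α] [MeasurableSpace β]

theorem integral_twoPointMeasure [MeasurableSingletonClass α] {a : ℝ}
    (ha : a ∈ Icc (0 : ℝ) 1) (x₁ x₀ : α) (f : α → ℝ) :
    ∫ s, f s ∂twoPointMeasure a x₁ x₀ = a * f x₁ + (1 - a) * f x₀ := by
  have hf : ∀ x : α, Integrable f (Measure.dirac x) := fun _ => integrable_dirac enorm_lt_top
  rw [twoPointMeasure, integral_add_measure ((hf x₁).smul_measure ENNReal.ofReal_ne_top)
      ((hf x₀).smul_measure ENNReal.ofReal_ne_top), integral_smul_measure, integral_smul_measure,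
    integral_dirac, integral_dirac, ENNReal.toReal_ofReal ha.1,
    ENNReal.toReal_ofReal (sub_nonneg.2 ha.2), smul_eq_mul, smul_eq_mul]

theorem Measurable.twoPointMeasure_apply {p : β → ℝ} (hp : Measurable p) (x₁ x₀ : α)
    (E : Set α) : Measurable fun z => twoPointMeasure (p z) x₁ x₀ E := by
  simp only [twoPointMeasure, Measure.coe_add, Measure.coe_smul, Pi.add_apply, Pi.smul_apply,
    smul_eq_mul]
  fun_prop

theorem eq_twoPointMeasure_integral {μ : Measure β} [IsProbabilityMeasure μ] {q : β → ℝ}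
    (hq : Measurable q) (hq01 : ∀ z, q z ∈ Icc (0 : ℝ) 1) {x₁ x₀ : α} {ρ : Measure α}
    (hρ : ∀ E, MeasurableSet E → ρ E = ∫⁻ z, twoPointMeasure (q z) x₁ x₀ E ∂μ) :
    ρ = twoPointMeasure (∫ z, q z ∂μ) x₁ x₀ := by
  have hqi : Integrable q μ := .of_mem_Icc 0 1 hq.aemeasurable (.of_forall hq01)
  have hqi' : ∫ z, (1 - q z) ∂μ = 1 - ∫ z, q z ∂μ := by
    rw [integral_sub (integrable_const 1) hqi, integral_const, probReal_univ, one_smul]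
  ext E hE
  rw [hρ E hE]
  simp only [twoPointMeasure, Measure.coe_add, Measure.coe_smul, Pi.add_apply, Pi.smul_apply,
    smul_eq_mul]
  rw [lintegral_add_left (hq.ennreal_ofReal.mul_const _),
    lintegral_mul_const _ hq.ennreal_ofReal,
    lintegral_mul_const _ (hq.const_sub 1).ennreal_ofReal,
    ← ofReal_integral_eq_lintegral_ofReal hqi (.of_forall fun z => (hq01 z).1),
    ← ofReal_integral_eq_lintegral_ofReal (f := fun z => 1 - q z)
      ((integrable_const 1).sub hqi) (.of_forall fun z => sub_nonneg.2 (hq01 z).2), hqi']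

end TwoPointMeasure

section CompactSpace

variable {X : Type*} [TopologicalSpace X] [CompactSpace X] [MeasurableSpace X]
  [OpensMeasurableSpace X] {f : X → ℝ}

theorem Continuous.integrable_of_compactSpace (hf : Continuous f) (μ : Measure X)
    [IsFiniteMeasure μ] : Integrable f μ :=
  hf.integrable_of_hasCompactSupport (.of_compactSpace f)

theorem Continuous.exists_forall_abs_integral_le (hf : Continuous f) :
    ∃ C, ∀ (μ : Measure X) [IsProbabilityMeasure μ], |∫ x, f x ∂μ| ≤ C :=
  ⟨_, fun μ _ => (BoundedContinuousFunction.mkOfCompact ⟨f, hf⟩).norm_integral_le_norm μ⟩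

end CompactSpace

theorem summable_geometric_mul_of_abs_le_s14 {r : ℝ} (hr₀ : 0 ≤ r) (hr₁ : r < 1) {A : ℕ → ℝ}
    {C : ℝ} (hA : ∀ t, |A t| ≤ C) : Summable fun t => r ^ t * A t :=
  ((summable_geometric_of_lt_one hr₀ hr₁).mul_right C).of_norm_bounded fun t => by
    rw [norm_mul, norm_pow, Real.norm_of_nonneg hr₀]
    exact mul_le_mul_of_nonneg_left (hA t) (by positivity)

theorem discounted_tsum_sub_mul_tsum {lam χ γ : ℝ} (hlam₀ : 0 < lam) (hlam₁ : lam < 1)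
    {A B W : ℕ → ℝ} {CA CB CW : ℝ} (hA : ∀ t, |A t| ≤ CA) (hB : ∀ t, |B t| ≤ CB)
    (hW : ∀ t, |W t| ≤ CW)
    (hrec : ∀ t, A t - χ * B t = lam * W (t + 1) - (W t + (1 + lam) * γ) / lam) :
    (1 - lam) * (∑' t, lam ^ (2 * t + 1) * A t - χ * ∑' t, lam ^ (2 * t + 1) * B t) =
      -((1 - lam) * W 0) - γ := by
  have hr₁ : lam ^ 2 < 1 := by nlinarith
  have hodd : ∀ D : ℕ → ℝ,
      (fun t => lam ^ (2 * t + 1) * D t) = fun t => lam * ((lam ^ 2) ^ t * D t) :=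
    fun D => funext fun t => by ring
  have hsA := hodd A ▸ (summable_geometric_mul_of_abs_le_s14 (sq_nonneg lam) hr₁ hA).mul_left lam
  have hsB := hodd B ▸ (summable_geometric_mul_of_abs_le_s14 (sq_nonneg lam) hr₁ hB).mul_left lam
  have hsW := summable_geometric_mul_of_abs_le_s14 (sq_nonneg lam) hr₁ hW
  have hterm : ∀ t, lam ^ (2 * t + 1) * A t - χ * (lam ^ (2 * t + 1) * B t) =
      ((lam ^ 2) ^ (t + 1) * W (t + 1) - (lam ^ 2) ^ t * W t) -
        (1 + lam) * γ * (lam ^ 2) ^ t := by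
    intro t
    calc _ = lam ^ (2 * t + 1) * (A t - χ * B t) := by ring
      _ = _ := by rw [hrec t]; field_simp; ring
  have hsum : ∑' t, lam ^ (2 * t + 1) * A t - χ * ∑' t, lam ^ (2 * t + 1) * B t =
      -W 0 - (1 + lam) * γ * (1 - lam ^ 2)⁻¹ := by
    have hsW' := (summable_nat_add_iff 1).mpr hsW
    rw [← tsum_mul_left, ← hsA.tsum_sub (hsB.mul_left χ), tsum_congr hterm,
      (hsW'.sub hsW).tsum_sub ((summable_geometric_of_lt_one (sq_nonneg lam) hr₁).mul_left _),
      hsW'.tsum_sub hsW, tsum_mul_left, tsum_geometric_of_lt_one (sq_nonneg lam) hr₁,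
      hsW.tsum_eq_zero_add]
    ring
  have h1 : 1 - lam ^ 2 ≠ 0 := by linarith
  rw [hsum]
  field_simp
  ring

section ReactiveStrategy

variable {X : Type*} [MeasurableSpace X]

/-- `ν t` is the joint law of `X`'s move in round `t` and `Y`'s reply, so this is the law of the
move of `Y` that `X` reacts to in round `t`. -/
noncomputable def reactedMoveLaw (σY0 : Measure X) (ν : ℕ → Measure (X × X)) : ℕ → Measure X
  | 0 => σY0
  | t + 1 => (ν t).map Prod.snd

variable {σY0 : Measure X} [IsProbabilityMeasure σY0] {ν : ℕ → Measure (X × X)}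
  [∀ t, IsProbabilityMeasure (ν t)] {p : X → ℝ} {x₁ x₀ : X}

instance (t : ℕ) : IsProbabilityMeasure (reactedMoveLaw σY0 ν t) := by
  cases t with
  | zero => assumption
  | succ t => exact Measure.isProbabilityMeasure_map measurable_snd.aemeasurable

theorem map_fst_eq_twoPointMeasure (hp : Measurable p) (hp01 : ∀ y, p y ∈ Icc (0 : ℝ) 1)
    (hν₀ : ∀ E, MeasurableSet E →
      ν 0 (E ×ˢ univ) = ∫⁻ y, twoPointMeasure (p y) x₁ x₀ E ∂σY0)
    (hν_succ : ∀ t E, MeasurableSet E →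
      ν (t + 1) (E ×ˢ univ) = ∫⁻ q, twoPointMeasure (p q.2) x₁ x₀ E ∂ν t) (t : ℕ) :
    (ν t).map Prod.fst = twoPointMeasure (∫ y, p y ∂reactedMoveLaw σY0 ν t) x₁ x₀ := by
  refine eq_twoPointMeasure_integral hp hp01 fun E hE => ?_
  rw [Measure.map_apply measurable_fst hE, ← prod_univ]
  cases t with
  | zero => exact hν₀ E hE
  | succ t =>
    rw [hν_succ t E hE, reactedMoveLaw,
      lintegral_map (hp.twoPointMeasure_apply x₁ x₀ E) measurable_snd]

variable [TopologicalSpace X] [CompactSpace X] [SecondCountableTopology X] [BorelSpace X]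
  [MeasurableSingletonClass X] {B C : X → ℝ} {lam χ γ : ℝ}

theorem integral_sub_mul_integral_of_map_fst_eq_twoPointMeasure (hB : Continuous B)
    (hC : Continuous C) (hB₀ : B x₀ = 0) (hC₀ : C x₀ = 0) {μ : Measure (X × X)}
    [IsProbabilityMeasure μ] {P : ℝ} (hP : P ∈ Icc (0 : ℝ) 1)
    (hμ : μ.map Prod.fst = twoPointMeasure P x₁ x₀) :
    ∫ q, (-C q.1 + lam * B q.2) ∂μ - χ * ∫ q, (B q.1 + lam * -C q.2) ∂μ =
      lam * ∫ q, (B q.2 + χ * C q.2) ∂μ - P * (χ * B x₁ + C x₁) := by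
  have hfst : ∫ q, (χ * B q.1 + C q.1) ∂μ = P * (χ * B x₁ + C x₁) := by
    rw [← integral_map measurable_fst.aemeasurable (by fun_prop : Continuous fun s =>
        χ * B s + C s).aestronglyMeasurable, hμ, integral_twoPointMeasure hP, hB₀, hC₀]
    ring
  have hint {F : X × X → ℝ} (hF : Continuous F) : Integrable F μ :=
    hF.integrable_of_compactSpace μ
  calc _ = ∫ q, (lam * (B q.2 + χ * C q.2) - (χ * B q.1 + C q.1)) ∂μ := by
        rw [← integral_const_mul, ← integral_sub (hint (by fun_prop)) (hint (by fun_prop))]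
        congr 1 with q
        ring
    _ = _ := by
        rw [integral_sub (hint (by fun_prop)) (hint (by fun_prop)), integral_const_mul, hfst]

theorem integral_sub_mul_integral_eq_of_reactive (hB : Continuous B) (hC : Continuous C)
    (hB₀ : B x₀ = 0) (hC₀ : C x₀ = 0) (hD : χ * B x₁ + C x₁ ≠ 0)
    (hp : ∀ y, p y = (B y + χ * C y + (1 + lam) * γ) / (lam * (χ * B x₁ + C x₁)))
    (hp01 : ∀ y, p y ∈ Icc (0 : ℝ) 1)
    (hν₀ : ∀ E, MeasurableSet E →
      ν 0 (E ×ˢ univ) = ∫⁻ y, twoPointMeasure (p y) x₁ x₀ E ∂σY0)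
    (hν_succ : ∀ t E, MeasurableSet E →
      ν (t + 1) (E ×ˢ univ) = ∫⁻ q, twoPointMeasure (p q.2) x₁ x₀ E ∂ν t)
    (hlam : lam ≠ 0) (t : ℕ) :
    ∫ q, (-C q.1 + lam * B q.2) ∂ν t - χ * ∫ q, (B q.1 + lam * -C q.2) ∂ν t =
      lam * ∫ y, (B y + χ * C y) ∂reactedMoveLaw σY0 ν (t + 1) -
        (∫ y, (B y + χ * C y) ∂reactedMoveLaw σY0 ν t + (1 + lam) * γ) / lam := by
  have hg : Continuous fun y => B y + χ * C y := by fun_prop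
  have hpC : Continuous p := by
    rw [funext hp]
    fun_prop
  have hP : ∫ y, p y ∂reactedMoveLaw σY0 ν t ∈ Icc (0 : ℝ) 1 := (convex_Icc 0 1).integral_mem
    isClosed_Icc (.of_forall hp01) (hpC.integrable_of_compactSpace _)
  have hpW : ∫ y, p y ∂reactedMoveLaw σY0 ν t =
      (∫ y, (B y + χ * C y) ∂reactedMoveLaw σY0 ν t + (1 + lam) * γ) /
        (lam * (χ * B x₁ + C x₁)) := by
    simp only [hp]
    rw [integral_div, integral_add (hg.integrable_of_compactSpace _) (integrable_const _),
      integral_const, probReal_univ, one_smul]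
  have hW_succ : ∫ y, (B y + χ * C y) ∂reactedMoveLaw σY0 ν (t + 1) =
      ∫ q, (B q.2 + χ * C q.2) ∂ν t :=
    integral_map measurable_snd.aemeasurable hg.aestronglyMeasurable
  rw [integral_sub_mul_integral_of_map_fst_eq_twoPointMeasure hB hC hB₀ hC₀ hP
    (map_fst_eq_twoPointMeasure hpC.measurable hp01 hν₀ hν_succ t), hpW, hW_succ]
  field_simp

theorem discounted_payoff_sub_mul_discounted_payoff_of_reactive (hB : Continuous B)
    (hC : Continuous C) (hB₀ : B x₀ = 0) (hC₀ : C x₀ = 0) (hD : χ * B x₁ + C x₁ ≠ 0)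
    (hp : ∀ y, p y = (B y + χ * C y + (1 + lam) * γ) / (lam * (χ * B x₁ + C x₁)))
    (hp01 : ∀ y, p y ∈ Icc (0 : ℝ) 1)
    (hν₀ : ∀ E, MeasurableSet E →
      ν 0 (E ×ˢ univ) = ∫⁻ y, twoPointMeasure (p y) x₁ x₀ E ∂σY0)
    (hν_succ : ∀ t E, MeasurableSet E →
      ν (t + 1) (E ×ˢ univ) = ∫⁻ q, twoPointMeasure (p q.2) x₁ x₀ E ∂ν t)
    (hlam₀ : 0 < lam) (hlam₁ : lam < 1) :
    (1 - lam) * ((∫ y, B y ∂σY0) + ∑' t, lam ^ (2 * t + 1) *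
        ∫ q, (-C q.1 + lam * B q.2) ∂ν t) -
      χ * ((1 - lam) * ((∫ y, -C y ∂σY0) + ∑' t, lam ^ (2 * t + 1) *
        ∫ q, (B q.1 + lam * -C q.2) ∂ν t)) = -γ := by
  obtain ⟨CA, hCA⟩ := (by fun_prop : Continuous fun q : X × X =>
    -C q.1 + lam * B q.2).exists_forall_abs_integral_le
  obtain ⟨CB, hCB⟩ := (by fun_prop : Continuous fun q : X × X =>
    B q.1 + lam * -C q.2).exists_forall_abs_integral_le
  obtain ⟨CW, hCW⟩ :=
    (by fun_prop : Continuous fun y => B y + χ * C y).exists_forall_abs_integral_le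
  have hsum := discounted_tsum_sub_mul_tsum hlam₀ hlam₁ (fun t => hCA (ν t))
    (fun t => hCB (ν t)) (fun t => hCW (reactedMoveLaw σY0 ν t))
    (integral_sub_mul_integral_eq_of_reactive hB hC hB₀ hC₀ hD hp hp01 hν₀ hν_succ hlam₀.ne')
  have hW₀ : ∫ y, (B y + χ * C y) ∂reactedMoveLaw σY0 ν 0 =
      ∫ y, B y ∂σY0 + χ * ∫ y, C y ∂σY0 := by
    rw [← integral_const_mul]
    exact integral_add (hB.integrable_of_compactSpace _)
      ((continuous_const.mul hC).integrable_of_compactSpace _)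
  rw [integral_neg]
  linear_combination hsum - (1 - lam) * hW₀

end ReactiveStrategy

theorem div_mem_Icc_zero_one_of_le {lam χ γ bK cK B C : ℝ} (hlam : 0 < lam) (hχ : 0 ≤ χ)
    (hB : B ∈ Icc 0 bK) (hC : C ∈ Icc 0 cK) (hcK : 0 < cK) (hγ : 0 ≤ γ)
    (hγK : γ ≤ χ * ((lam * bK - cK) / (1 + lam)) - (bK - lam * cK) / (1 + lam)) :
    (B + χ * C + (1 + lam) * γ) / (lam * (χ * bK + cK)) ∈ Icc (0 : ℝ) 1 := by
  have hD : 0 < lam * (χ * bK + cK) := by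
    have := hB.1.trans hB.2
    positivity
  have hγK' : (1 + lam) * γ ≤ χ * (lam * bK - cK) - (bK - lam * cK) := by
    rw [mul_comm, ← le_div_iff₀ (by linarith)]
    linarith [show χ * ((lam * bK - cK) / (1 + lam)) - (bK - lam * cK) / (1 + lam) =
      (χ * (lam * bK - cK) - (bK - lam * cK)) / (1 + lam) by ring]
  refine ⟨div_nonneg (by nlinarith [hB.1, hC.1]) hD.le, (div_le_one hD).2 ?_⟩
  nlinarith [hB.2, mul_le_mul_of_nonneg_left hC.2 hχ]

theorem stmt_14_general
    (K : ℝ) (hK : 0 < K) (b c : ℝ → ℝ)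
    (hbC : ContinuousOn b (Set.Icc 0 K)) (hcC : ContinuousOn c (Set.Icc 0 K))
    (hbM : MonotoneOn b (Set.Icc 0 K)) (hcM : MonotoneOn c (Set.Icc 0 K))
    (hb0 : b 0 = 0) (hc0 : c 0 = 0)
    (hcpos : ∀ s ∈ Set.Ioc (0 : ℝ) K, 0 < c s)
    (lam : ℝ) (hlam0 : 0 < lam) (hlam1 : lam < 1)
    (χ : ℝ) (hχ : 1 ≤ χ)
    (κX κY γ : ℝ) (hγ : γ = χ * κY - κX)
    (hκ1 : κX ≤ χ * κY)
    (hκ2 : χ * κY ≤ κX +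
      (χ * ((lam * b K - c K) / (1 + lam)) - (b K - lam * c K) / (1 + lam)))
    (p : Set.Icc (0 : ℝ) K → ℝ)
    (hp : ∀ y : Set.Icc (0 : ℝ) K,
      p y = (b ↑y + χ * c ↑y + (1 + lam) * γ) / (lam * (χ * b K + c K)))
    (σX0 : Set.Icc (0 : ℝ) K → Measure (Set.Icc (0 : ℝ) K))
    (hσX0 : ∀ y0 : Set.Icc (0 : ℝ) K, σX0 y0 =
      ENNReal.ofReal (p y0) • Measure.dirac (⟨K, Set.right_mem_Icc.mpr hK.le⟩ : Set.Icc (0 : ℝ) K)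
        + ENNReal.ofReal (1 - p y0) • Measure.dirac (⟨0, Set.left_mem_Icc.mpr hK.le⟩ : Set.Icc (0 : ℝ) K))
    (σX : Set.Icc (0 : ℝ) K × Set.Icc (0 : ℝ) K → Measure (Set.Icc (0 : ℝ) K))
    (hσX : ∀ q : Set.Icc (0 : ℝ) K × Set.Icc (0 : ℝ) K, σX q =
      ENNReal.ofReal (p q.2) • Measure.dirac (⟨K, Set.right_mem_Icc.mpr hK.le⟩ : Set.Icc (0 : ℝ) K)
        + ENNReal.ofReal (1 - p q.2) • Measure.dirac (⟨0, Set.left_mem_Icc.mpr hK.le⟩ : Set.Icc (0 : ℝ) K)) :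
    (∀ y : Set.Icc (0 : ℝ) K, 0 ≤ p y ∧ p y ≤ 1) ∧
    (∀ x y y0 : Set.Icc (0 : ℝ) K,
      (-(c ↑x) - χ * b ↑x + γ) + lam * (b ↑y + χ * c ↑y + γ)
          + ((1 - lam ^ 2) / lam) * (b ↑y0 + χ * c ↑y0 + γ) =
        (-(χ * b ↑x) - c ↑x + γ)
          - lam ^ 2 * (∫ s, (-(χ * b ↑s) - c ↑s + γ) ∂(σX (x, y)))
          - (1 - lam ^ 2) * (∫ s, (-(χ * b ↑s) - c ↑s + γ) ∂(σX0 y0))) ∧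
    (∀ σY0 : Measure (Set.Icc (0 : ℝ) K), IsProbabilityMeasure σY0 →
      ∀ ν : ℕ → Measure (Set.Icc (0 : ℝ) K × Set.Icc (0 : ℝ) K),
      (∀ t, IsProbabilityMeasure (ν t)) →
      (∀ E : Set (Set.Icc (0 : ℝ) K), MeasurableSet E →
        ν 0 (E ×ˢ Set.univ) = ∫⁻ y0, σX0 y0 E ∂σY0) →
      (∀ (t : ℕ) (E : Set (Set.Icc (0 : ℝ) K)), MeasurableSet E →
        ν (t + 1) (E ×ˢ Set.univ) = ∫⁻ q, σX q E ∂(ν t)) →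
      ((1 - lam) * ((∫ y0, b ↑y0 ∂σY0) + ∑' t : ℕ, lam ^ (2 * t + 1) *
          ∫ q, (-(c ↑q.1) + lam * b ↑q.2) ∂(ν t))) - κX =
        χ * (((1 - lam) * ((∫ y0, -(c ↑y0) ∂σY0) + ∑' t : ℕ, lam ^ (2 * t + 1) *
          ∫ q, (b ↑q.1 + lam * (-(c ↑q.2))) ∂(ν t))) - κY)) := by
  set xK : Icc (0 : ℝ) K := ⟨K, right_mem_Icc.mpr hK.le⟩
  set x₀ : Icc (0 : ℝ) K := ⟨0, left_mem_Icc.mpr hK.le⟩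
  have hb : Continuous fun s : Icc (0 : ℝ) K => b s := hbC.domRestrict
  have hc : Continuous fun s : Icc (0 : ℝ) K => c s := hcC.domRestrict
  have hbI (y : Icc (0 : ℝ) K) : b y ∈ Icc 0 (b K) := by
    simpa only [hb0] using hbM.mapsTo_Icc y.2
  have hcI (y : Icc (0 : ℝ) K) : c y ∈ Icc 0 (c K) := by
    simpa only [hc0] using hcM.mapsTo_Icc y.2
  have hcK : 0 < c K := hcpos K ⟨hK, le_rfl⟩
  have hD : 0 < χ * b K + c K := by
    have := (hbI xK).1
    positivity
  have hp01 (y : Icc (0 : ℝ) K) : p y ∈ Icc (0 : ℝ) 1 := by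
    rw [hp y]
    exact div_mem_Icc_zero_one_of_le hlam0 (by linarith) (hbI y) (hcI y) hcK (by linarith)
      (by linarith)
  obtain rfl : σX0 = fun y0 => twoPointMeasure (p y0) xK x₀ := funext hσX0
  obtain rfl : σX = fun q => twoPointMeasure (p q.2) xK x₀ := funext hσX
  refine ⟨hp01, fun x y y0 => ?_, fun σY0 _ ν _ hν₀ hν_succ => ?_⟩
  · beta_reduce
    rw [integral_twoPointMeasure (hp01 y), integral_twoPointMeasure (hp01 y0), hp y, hp y0]
    simp only [xK, x₀, hb0, hc0]
    field_simp
    ring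
  · have := discounted_payoff_sub_mul_discounted_payoff_of_reactive hb hc hb0 hc0 hD.ne' hp hp01
      hν₀ hν_succ hlam0 hlam1
    linear_combination this - hγ

/-- Reactive two-point extortionate/generous strategies in the
strictly-alternating continuous Donation Game in which `Y` moves first: under
the stated conditions on `λ`, `χ`, `κ_X`, `κ_Y` and `γ = χκ_Y − κ_X`, the
reaction probabilities `p(y)` lie in `[0,1]`, the strategy
`σX0[y₀] = p(y₀) δ_K + (1−p(y₀)) δ_0`, `σX[x,y] = p(y) δ_K + (1−p(y)) δ_0`
satisfies the autocratic identity with `ψ(s) = −χ b(s) − c(s) + γ`, and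
consequently it unilaterally enforces `π_X − κ_X = χ (π_Y − κ_Y)` for every
strategy of player `Y`. -/
theorem stmt_14
    (K : ℝ) (hK : 0 < K) (b c : ℝ → ℝ)
    (hbC : ContinuousOn b (Set.Icc 0 K)) (hcC : ContinuousOn c (Set.Icc 0 K))
    (hbM : MonotoneOn b (Set.Icc 0 K)) (hcM : MonotoneOn c (Set.Icc 0 K))
    (hb0 : b 0 = 0) (hc0 : c 0 = 0)
    (hcb : ∀ s ∈ Set.Ioc (0 : ℝ) K, c s < b s)
    (hcpos : ∀ s ∈ Set.Ioc (0 : ℝ) K, 0 < c s)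
    (lam : ℝ) (hlam0 : 0 < lam) (hlam1 : lam < 1)
    (χ : ℝ) (hχ : 1 ≤ χ)
    (hlamge : (b K + χ * c K) / (χ * b K + c K) ≤ lam)
    (κX κY γ : ℝ) (hγ : γ = χ * κY - κX)
    (hκ1 : κX ≤ χ * κY)
    (hκ2 : χ * κY ≤ κX +
      (χ * ((lam * b K - c K) / (1 + lam)) - (b K - lam * c K) / (1 + lam)))
    (p : Set.Icc (0 : ℝ) K → ℝ)
    (hp : ∀ y : Set.Icc (0 : ℝ) K,
      p y = (b ↑y + χ * c ↑y + (1 + lam) * γ) / (lam * (χ * b K + c K)))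
    (σX0 : Set.Icc (0 : ℝ) K → Measure (Set.Icc (0 : ℝ) K))
    (hσX0 : ∀ y0 : Set.Icc (0 : ℝ) K, σX0 y0 =
      ENNReal.ofReal (p y0) • Measure.dirac (⟨K, Set.right_mem_Icc.mpr hK.le⟩ : Set.Icc (0 : ℝ) K)
        + ENNReal.ofReal (1 - p y0) • Measure.dirac (⟨0, Set.left_mem_Icc.mpr hK.le⟩ : Set.Icc (0 : ℝ) K))
    (σX : Set.Icc (0 : ℝ) K × Set.Icc (0 : ℝ) K → Measure (Set.Icc (0 : ℝ) K))
    (hσX : ∀ q : Set.Icc (0 : ℝ) K × Set.Icc (0 : ℝ) K, σX q =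
      ENNReal.ofReal (p q.2) • Measure.dirac (⟨K, Set.right_mem_Icc.mpr hK.le⟩ : Set.Icc (0 : ℝ) K)
        + ENNReal.ofReal (1 - p q.2) • Measure.dirac (⟨0, Set.left_mem_Icc.mpr hK.le⟩ : Set.Icc (0 : ℝ) K)) :
    (∀ y : Set.Icc (0 : ℝ) K, 0 ≤ p y ∧ p y ≤ 1) ∧
    (∀ x y y0 : Set.Icc (0 : ℝ) K,
      (-(c ↑x) - χ * b ↑x + γ) + lam * (b ↑y + χ * c ↑y + γ)
          + ((1 - lam ^ 2) / lam) * (b ↑y0 + χ * c ↑y0 + γ) =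
        (-(χ * b ↑x) - c ↑x + γ)
          - lam ^ 2 * (∫ s, (-(χ * b ↑s) - c ↑s + γ) ∂(σX (x, y)))
          - (1 - lam ^ 2) * (∫ s, (-(χ * b ↑s) - c ↑s + γ) ∂(σX0 y0))) ∧
    (∀ σY0 : Measure (Set.Icc (0 : ℝ) K), IsProbabilityMeasure σY0 →
      ∀ ν : ℕ → Measure (Set.Icc (0 : ℝ) K × Set.Icc (0 : ℝ) K),
      (∀ t, IsProbabilityMeasure (ν t)) →
      (∀ E : Set (Set.Icc (0 : ℝ) K), MeasurableSet E →
        ν 0 (E ×ˢ Set.univ) = ∫⁻ y0, σX0 y0 E ∂σY0) →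
      (∀ (t : ℕ) (E : Set (Set.Icc (0 : ℝ) K)), MeasurableSet E →
        ν (t + 1) (E ×ˢ Set.univ) = ∫⁻ q, σX q E ∂(ν t)) →
      ((1 - lam) * ((∫ y0, b ↑y0 ∂σY0) + ∑' t : ℕ, lam ^ (2 * t + 1) *
          ∫ q, (-(c ↑q.1) + lam * b ↑q.2) ∂(ν t))) - κX =
        χ * (((1 - lam) * ((∫ y0, -(c ↑y0) ∂σY0) + ∑' t : ℕ, lam ^ (2 * t + 1) *
          ∫ q, (b ↑q.1 + lam * (-(c ↑q.2))) ∂(ν t))) - κY)) :=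
  stmt_14_general K hK b c hbC hcC hbM hcM hb0 hc0 hcpos lam hlam0 hlam1 χ hχ κX κY γ hγ hκ1 hκ2 p
    hp σX0 hσX0 σX hσX
end

section
/- Let 0 < λ < 1 and let γ satisfy 0 ≤ γ ≤ (b(K) − λ c(K))/(1+λ). Suppose p_0 ∈ [0,1] satisfies max{ (λ c(K) + (1+λ)γ)/((1−λ²) b(K)) − λ²/(1−λ²), 0 } ≤ p_0 ≤ min{ γ/((1−λ) b(K)), 1 }, and define p(y) := (λ c(y) + (1+λ)γ)/(λ² b(K)) − ((1−λ²)/λ²) p_0 for y ∈ [0,K]. Then 0 ≤ p(y) ≤ 1 for all y ∈ [0,K], and the two-point memory-one strategy σ_X^0 = p_0 δ_K + (1−p_0) δ_0, σ_X[x,y] = p(y) δ_K + (1−p(y)) δ_0 satisfies, with ψ(s) := b(s), the identity (b(x) − γ) + λ(−c(y) − γ) = ψ(x) − λ² ∫ ψ dσ_X[x,y] − (1−λ²) ∫ ψ dσ_X^0 for all x, y ∈ [0,K]. Consequently, in the strictly-alternating continuous Donation Game in which X moves first, this strategy is an equalizer that unilaterally enforces π_Y = γ. -/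
/-!
Write `a t` for the expected value of `ψ = b` at `X`'s move in round `t`. Against the reactive
two-point strategy the autocratic identity turns `Y`'s expected payoff in round `t` into
`(1 + λ) γ + a t - λ² a (t + 1) - (1 - λ²) a 0`: the marginal of `X`'s next move is again a
two-point measure, whose weight on `K` is the average of `p`. Weighted by `λ^(2t)` the sum
telescopes to `a 0`, and after normalizing by `1 - λ` only `γ` is left. The reaction
probabilities are chosen so that `λ² b(K) p(y) + (1 - λ²) b(K) p₀ = λ c(y) + (1 + λ) γ`; the
bounds on `p₀` are exactly what keeps `p(y)` in `[0, 1]`.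
-/

open MeasureTheory

noncomputable def twoPoint {α : Type*} [MeasurableSpace α] (a b : α) (q : ℝ) : Measure α :=
  ENNReal.ofReal q • Measure.dirac a + ENNReal.ofReal (1 - q) • Measure.dirac b

section TwoPoint

variable {α β : Type*} [MeasurableSpace α] [MeasurableSpace β] {a b : α}

lemma twoPoint_apply (q : ℝ) (E : Set α) :
    twoPoint a b q E
      = ENNReal.ofReal q * Measure.dirac a E + ENNReal.ofReal (1 - q) * Measure.dirac b E := by
  simp [twoPoint]

lemma integral_twoPoint [MeasurableSingletonClass α] (f : α → ℝ) {q : ℝ} (hq0 : 0 ≤ q)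
    (hq1 : q ≤ 1) : ∫ x, f x ∂twoPoint a b q = q * f a + (1 - q) * f b := by
  rw [twoPoint, integral_add_measure ((integrable_dirac enorm_lt_top).smul_measure
      ENNReal.ofReal_ne_top) ((integrable_dirac enorm_lt_top).smul_measure ENNReal.ofReal_ne_top),
    integral_smul_measure, integral_smul_measure, integral_dirac, integral_dirac,
    ENNReal.toReal_ofReal hq0, ENNReal.toReal_ofReal (sub_nonneg.mpr hq1), smul_eq_mul,
    smul_eq_mul]

lemma lintegral_twoPoint_apply {μ : Measure β} [IsProbabilityMeasure μ] {w : β → ℝ}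
    (hw : Measurable w) (hw0 : ∀ x, 0 ≤ w x) (hw1 : ∀ x, w x ≤ 1) (E : Set α) :
    ∫⁻ x, twoPoint a b (w x) E ∂μ = twoPoint a b (∫ x, w x ∂μ) E := by
  have hwi : Integrable w μ := .of_mem_Icc 0 1 hw.aemeasurable (.of_forall fun x ↦ ⟨hw0 x, hw1 x⟩)
  have hlin : ∀ {v : β → ℝ}, Integrable v μ → (∀ x, 0 ≤ v x) →
      ∫⁻ x, ENNReal.ofReal (v x) ∂μ = ENNReal.ofReal (∫ x, v x ∂μ) := fun hv hv0 ↦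
    (ofReal_integral_eq_lintegral_ofReal hv (.of_forall hv0)).symm
  have hsub : ∫ x, (1 - w x) ∂μ = 1 - ∫ x, w x ∂μ := by
    rw [integral_sub (integrable_const 1) hwi, integral_const, probReal_univ, one_smul]
  simp only [twoPoint_apply]
  rw [lintegral_add_left (hw.ennreal_ofReal.mul_const _), lintegral_mul_const' _ _
      (measure_ne_top _ _), lintegral_mul_const' _ _ (measure_ne_top _ _), hlin hwi hw0,
    hlin (v := fun x ↦ 1 - w x) ((integrable_const 1).sub hwi) (fun x ↦ sub_nonneg.mpr (hw1 x)),
    hsub]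

lemma integral_comp_fst_of_prod_univ {ν : Measure (α × β)} {m : Measure α}
    (hν : ∀ E, MeasurableSet E → ν (E ×ˢ Set.univ) = m E) {f : α → ℝ}
    (hf : AEStronglyMeasurable f m) : ∫ q, f q.1 ∂ν = ∫ x, f x ∂m := by
  have hmap : ν.map Prod.fst = m := by
    ext E hE
    rw [Measure.map_apply measurable_fst hE, ← Set.prod_univ, hν E hE]
  rw [← hmap, integral_map measurable_fst.aemeasurable (hmap ▸ hf)]

lemma integral_integral_twoPoint [MeasurableSingletonClass α] {μ : Measure β}
    [IsProbabilityMeasure μ] {w : β → ℝ} (hw : Integrable w μ) (hw0 : ∀ x, 0 ≤ w x)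
    (hw1 : ∀ x, w x ≤ 1) (f : α → ℝ) :
    ∫ x, (∫ s, f s ∂twoPoint a b (w x)) ∂μ = ∫ s, f s ∂twoPoint a b (∫ x, w x ∂μ) := by
  have hf : ∀ q, 0 ≤ q → q ≤ 1 → ∫ s, f s ∂twoPoint a b q = f b + (f a - f b) * q :=
    fun q hq0 hq1 ↦ by rw [integral_twoPoint f hq0 hq1]; ring
  have hP1 : ∫ x, w x ∂μ ≤ 1 := by simpa using integral_mono hw (integrable_const 1) hw1
  rw [integral_congr_ae (.of_forall fun x ↦ hf _ (hw0 x) (hw1 x)),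
    hf _ (integral_nonneg hw0) hP1, integral_add (integrable_const _) (hw.const_mul _),
    integral_const, integral_const_mul, probReal_univ, one_smul]

end TwoPoint

lemma hasSum_pow_mul_sub_telescope {r C : ℝ} (hr0 : 0 ≤ r) (hr1 : r < 1) {a : ℕ → ℝ}
    (ha : ∀ t, ‖a t‖ ≤ C) : HasSum (fun t ↦ r ^ t * (a t - r * a (t + 1))) (a 0) := by
  have hs : Summable fun t ↦ r ^ t * a t :=
    .of_norm_bounded ((summable_geometric_of_lt_one hr0 hr1).mul_right C) fun t ↦ by
      rw [norm_mul, norm_pow, Real.norm_of_nonneg hr0]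
      exact mul_le_mul_of_nonneg_left (ha t) (by positivity)
  have hs' : Summable fun t ↦ r ^ (t + 1) * a (t + 1) := (summable_nat_add_iff 1).mpr hs
  have h := hs.hasSum.sub hs'.hasSum
  rw [hs.tsum_eq_zero_add, add_sub_cancel_right, pow_zero, one_mul] at h
  exact h.congr_fun fun t ↦ by ring

lemma one_sub_mul_tsum_eq_of_telescoping {lam γ C : ℝ} (hlam0 : 0 ≤ lam) (hlam1 : lam < 1)
    {a u : ℕ → ℝ} (ha : ∀ t, ‖a t‖ ≤ C)
    (hu : ∀ t, u t = (1 + lam) * γ + a t - lam ^ 2 * a (t + 1) - (1 - lam ^ 2) * a 0) :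
    (1 - lam) * ∑' t, lam ^ (2 * t) * u t = γ := by
  have hr1 : lam ^ 2 < 1 := by nlinarith
  have hsum := (hasSum_pow_mul_sub_telescope (sq_nonneg lam) hr1 ha).add
    ((hasSum_geometric_of_lt_one (sq_nonneg lam) hr1).mul_right
      ((1 + lam) * γ - (1 - lam ^ 2) * a 0))
  rw [(hsum.congr_fun fun t ↦ by rw [hu, pow_mul]; ring).tsum_eq]
  have : (1 : ℝ) - lam ^ 2 ≠ 0 := by linarith
  field_simp
  ring

lemma reaction_prob_mem_Icc {lam γ p0 bK cK cy : ℝ} (hlam0 : 0 < lam) (hlam1 : lam < 1)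
    (hbK : 0 < bK) (hcy0 : 0 ≤ cy) (hcyK : cy ≤ cK)
    (hp0lb : max ((lam * cK + (1 + lam) * γ) / ((1 - lam ^ 2) * bK)
      - lam ^ 2 / (1 - lam ^ 2)) 0 ≤ p0)
    (hp0ub : p0 ≤ min (γ / ((1 - lam) * bK)) 1) :
    0 ≤ (lam * cy + (1 + lam) * γ) / (lam ^ 2 * bK) - ((1 - lam ^ 2) / lam ^ 2) * p0 ∧
      (lam * cy + (1 + lam) * γ) / (lam ^ 2 * bK) - ((1 - lam ^ 2) / lam ^ 2) * p0 ≤ 1 := by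
  have h1l2 : 0 < 1 - lam ^ 2 := by nlinarith
  have hub : p0 * ((1 - lam) * bK) ≤ γ :=
    (le_div_iff₀ (by nlinarith)).mp (hp0ub.trans (min_le_left _ _))
  have hlb : lam * cK + (1 + lam) * γ ≤ (p0 + lam ^ 2 / (1 - lam ^ 2)) * ((1 - lam ^ 2) * bK) :=
    (div_le_iff₀ (by positivity)).mp (sub_le_iff_le_add.mp ((le_max_left _ _).trans hp0lb))
  have hval : (lam * cy + (1 + lam) * γ) / (lam ^ 2 * bK) - ((1 - lam ^ 2) / lam ^ 2) * p0
      = (lam * cy + (1 + lam) * γ - (1 - lam ^ 2) * bK * p0) / (lam ^ 2 * bK) := by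
    field_simp
  rw [hval, div_le_one (by positivity)]
  field_simp at hlb
  constructor
  · apply div_nonneg _ (by positivity)
    nlinarith
  · nlinarith

theorem discounted_payoff_eq_of_twoPoint_autocratic {α β : Type*} [MeasurableSpace α] [MeasurableSingletonClass α]
    [MeasurableSpace β] {top bot : α} {ψ : α → ℝ} {C : ℝ} (hψ : Measurable ψ)
    (hψC : ∀ x, ‖ψ x‖ ≤ C) {w : α × β → ℝ} (hw : Measurable w) (hw0 : ∀ q, 0 ≤ w q)
    (hw1 : ∀ q, w q ≤ 1) {p0 : ℝ} {σ0 : Measure α} (hσ0 : σ0 = twoPoint top bot p0)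
    {σ : α × β → Measure α} (hσ : ∀ q, σ q = twoPoint top bot (w q)) {lam γ : ℝ}
    (hlam0 : 0 ≤ lam) (hlam1 : lam < 1) {u : α × β → ℝ}
    (hu : ∀ q, u q - (1 + lam) * γ =
      ψ q.1 - lam ^ 2 * (∫ s, ψ s ∂σ q) - (1 - lam ^ 2) * ∫ s, ψ s ∂σ0)
    {ν : ℕ → Measure (α × β)} (hν : ∀ t, IsProbabilityMeasure (ν t))
    (hν0 : ∀ E, MeasurableSet E → ν 0 (E ×ˢ Set.univ) = σ0 E)
    (hνsucc : ∀ t E, MeasurableSet E → ν (t + 1) (E ×ˢ Set.univ) = ∫⁻ q, σ q E ∂ν t) :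
    (1 - lam) * ∑' t, lam ^ (2 * t) * ∫ q, u q ∂ν t = γ := by
  subst hσ0
  obtain rfl : σ = fun q ↦ twoPoint top bot (w q) := funext hσ
  set a : ℕ → ℝ := fun t ↦ ∫ q, ψ q.1 ∂ν t
  have hwi : ∀ t, Integrable w (ν t) := fun t ↦
    .of_mem_Icc 0 1 hw.aemeasurable (.of_forall fun q ↦ ⟨hw0 q, hw1 q⟩)
  have ha0 : a 0 = ∫ s, ψ s ∂twoPoint top bot p0 :=
    integral_comp_fst_of_prod_univ hν0 hψ.aestronglyMeasurable
  have hasucc : ∀ t, a (t + 1) = ∫ q, (∫ s, ψ s ∂twoPoint top bot (w q)) ∂ν t := fun t ↦ by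
    rw [integral_integral_twoPoint (hwi t) hw0 hw1]
    exact integral_comp_fst_of_prod_univ
      (fun E hE ↦ (hνsucc t E hE).trans (lintegral_twoPoint_apply hw hw0 hw1 E))
      hψ.aestronglyMeasurable
  refine one_sub_mul_tsum_eq_of_telescoping hlam0 hlam1 (a := a) (C := C) (fun t ↦ ?_) fun t ↦ ?_
  · simpa using norm_integral_le_of_norm_le_const (μ := ν t) (.of_forall fun q ↦ hψC q.1)
  · have hψi : Integrable (fun q ↦ ψ q.1) (ν t) :=
      .of_bound (hψ.comp measurable_fst).aestronglyMeasurable C (.of_forall fun q ↦ hψC q.1)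
    have hgi : Integrable (fun q ↦ ∫ s, ψ s ∂twoPoint top bot (w q)) (ν t) := by
      refine ((integrable_const (ψ bot)).add ((hwi t).const_mul (ψ top - ψ bot))).congr
        (.of_forall fun q ↦ ?_)
      simp only [Pi.add_apply, integral_twoPoint ψ (hw0 q) (hw1 q)]
      ring
    have hu' : ∀ q, u q = ((1 + lam) * γ - (1 - lam ^ 2) * a 0)
        + (ψ q.1 - lam ^ 2 * ∫ s, ψ s ∂twoPoint top bot (w q)) :=
      fun q ↦ by rw [ha0]; linarith [hu q]
    rw [integral_congr_ae (.of_forall hu'), integral_add (integrable_const _) ?int,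
      integral_sub hψi (hgi.const_mul _), integral_const_mul, integral_const, probReal_univ,
      one_smul, hasucc]
    · ring
    case int => exact hψi.sub (hgi.const_mul _)

theorem stmt_15_general
    (K : ℝ) (hK : 0 < K) (b c : ℝ → ℝ)
    (hbC : ContinuousOn b (Set.Icc 0 K)) (hcC : ContinuousOn c (Set.Icc 0 K))
    (hcM : MonotoneOn c (Set.Icc 0 K))
    (hb0 : b 0 = 0) (hc0 : c 0 = 0)
    (hcb : ∀ s ∈ Set.Ioc (0 : ℝ) K, c s < b s)
    (lam : ℝ) (hlam0 : 0 < lam) (hlam1 : lam < 1)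
    (γ : ℝ)
    (p0 : ℝ)
    (hp0lb : max ((lam * c K + (1 + lam) * γ) / ((1 - lam ^ 2) * b K)
        - lam ^ 2 / (1 - lam ^ 2)) 0 ≤ p0)
    (hp0ub : p0 ≤ min (γ / ((1 - lam) * b K)) 1)
    (p : Set.Icc (0 : ℝ) K → ℝ)
    (hp : ∀ y : Set.Icc (0 : ℝ) K,
      p y = (lam * c ↑y + (1 + lam) * γ) / (lam ^ 2 * b K)
        - ((1 - lam ^ 2) / lam ^ 2) * p0)
    (σX0 : Measure (Set.Icc (0 : ℝ) K))
    (hσX0 : σX0 =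
      ENNReal.ofReal p0 • Measure.dirac (⟨K, Set.right_mem_Icc.mpr hK.le⟩ : Set.Icc (0 : ℝ) K)
        + ENNReal.ofReal (1 - p0) • Measure.dirac (⟨0, Set.left_mem_Icc.mpr hK.le⟩ : Set.Icc (0 : ℝ) K))
    (σX : Set.Icc (0 : ℝ) K × Set.Icc (0 : ℝ) K → Measure (Set.Icc (0 : ℝ) K))
    (hσX : ∀ q : Set.Icc (0 : ℝ) K × Set.Icc (0 : ℝ) K, σX q =
      ENNReal.ofReal (p q.2) • Measure.dirac (⟨K, Set.right_mem_Icc.mpr hK.le⟩ : Set.Icc (0 : ℝ) K)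
        + ENNReal.ofReal (1 - p q.2) • Measure.dirac (⟨0, Set.left_mem_Icc.mpr hK.le⟩ : Set.Icc (0 : ℝ) K)) :
    (∀ y : Set.Icc (0 : ℝ) K, 0 ≤ p y ∧ p y ≤ 1) ∧
    (∀ x y : Set.Icc (0 : ℝ) K,
      (b ↑x - γ) + lam * (-(c ↑y) - γ) =
        b ↑x - lam ^ 2 * (∫ s, b ↑s ∂(σX (x, y)))
          - (1 - lam ^ 2) * (∫ s, b ↑s ∂σX0)) ∧
    (∀ ν : ℕ → Measure (Set.Icc (0 : ℝ) K × Set.Icc (0 : ℝ) K),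
      (∀ t, IsProbabilityMeasure (ν t)) →
      (∀ E : Set (Set.Icc (0 : ℝ) K), MeasurableSet E →
        ν 0 (E ×ˢ Set.univ) = σX0 E) →
      (∀ (t : ℕ) (E : Set (Set.Icc (0 : ℝ) K)), MeasurableSet E →
        ν (t + 1) (E ×ˢ Set.univ) = ∫⁻ q, σX q E ∂(ν t)) →
      (1 - lam) * ∑' t : ℕ, lam ^ (2 * t) *
          ∫ q, (b ↑q.1 + lam * (-(c ↑q.2))) ∂(ν t) = γ) := by
  have hK0 : (0 : ℝ) ∈ Set.Icc 0 K := Set.left_mem_Icc.mpr hK.le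
  have hKK : K ∈ Set.Icc 0 K := Set.right_mem_Icc.mpr hK.le
  have hbK : 0 < b K := (hc0.symm.trans_le (hcM hK0 hKK hK.le)).trans_lt (hcb K ⟨hK, le_rfl⟩)
  have hp_mem : ∀ y, 0 ≤ p y ∧ p y ≤ 1 := fun y ↦ hp y ▸ reaction_prob_mem_Icc hlam0 hlam1 hbK
    (hc0.symm.trans_le (hcM hK0 y.2 y.2.1)) (hcM y.2 hKK y.2.2) hp0lb hp0ub
  have hp0_mem : 0 ≤ p0 ∧ p0 ≤ 1 :=
    ⟨(le_max_right _ _).trans hp0lb, hp0ub.trans (min_le_right _ _)⟩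
  have hint : ∀ {q}, 0 ≤ q → q ≤ 1 →
      ∫ s, b ↑s ∂twoPoint (⟨K, hKK⟩ : Set.Icc (0 : ℝ) K) ⟨0, hK0⟩ q = q * b K :=
    fun hq0 hq1 ↦ by simp [integral_twoPoint _ hq0 hq1, hb0]
  have hσX_int : ∀ q, ∫ s, b ↑s ∂σX q = p q.2 * b K := fun q ↦ by
    rw [hσX q]; exact hint (hp_mem q.2).1 (hp_mem q.2).2
  have hσX0_int : ∫ s, b ↑s ∂σX0 = p0 * b K := by rw [hσX0]; exact hint hp0_mem.1 hp0_mem.2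
  have hidentity : ∀ x y : Set.Icc (0 : ℝ) K, (b ↑x - γ) + lam * (-(c ↑y) - γ) =
      b ↑x - lam ^ 2 * (∫ s, b ↑s ∂(σX (x, y))) - (1 - lam ^ 2) * (∫ s, b ↑s ∂σX0) := by
    intro x y
    rw [hσX_int, hσX0_int, hp y]
    field_simp
    ring
  refine ⟨hp_mem, hidentity, fun ν hν hν0 hνsucc ↦ ?_⟩
  obtain ⟨C, hC⟩ := isCompact_Icc.exists_bound_of_continuousOn hbC
  have hcS : Continuous fun s : Set.Icc (0 : ℝ) K ↦ c s := hcC.domRestrict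
  have hpc : Continuous p := (continuous_congr hp).mpr <|
    (((continuous_const.mul hcS).add continuous_const).div_const _).sub continuous_const
  exact discounted_payoff_eq_of_twoPoint_autocratic (ψ := fun s : Set.Icc (0 : ℝ) K ↦ b s)
    hbC.domRestrict.measurable (fun s ↦ hC s s.2) (hpc.measurable.comp measurable_snd)
    (fun q ↦ (hp_mem q.2).1) (fun q ↦ (hp_mem q.2).2) hσX0 hσX hlam0.le hlam1
    (fun ⟨x, y⟩ ↦ by linarith [hidentity x y]) hν hν0 hνsucc

/-- Two-point equalizer strategies in the strictly-alternating continuous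
Donation Game in which `X` moves first: for `0 ≤ γ ≤ (b(K) − λ c(K))/(1+λ)`
and suitable initial cooperation probability `p₀`, the reaction probabilities
`p(y)` lie in `[0,1]`, the two-point strategy `σX0 = p₀ δ_K + (1−p₀) δ_0`,
`σX[x,y] = p(y) δ_K + (1−p(y)) δ_0` satisfies the autocratic identity with
`ψ = b`, and consequently it unilaterally enforces `π_Y = γ` for every
strategy of player `Y`. -/
theorem stmt_15
    (K : ℝ) (hK : 0 < K) (b c : ℝ → ℝ)
    (hbC : ContinuousOn b (Set.Icc 0 K)) (hcC : ContinuousOn c (Set.Icc 0 K))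
    (hbM : MonotoneOn b (Set.Icc 0 K)) (hcM : MonotoneOn c (Set.Icc 0 K))
    (hb0 : b 0 = 0) (hc0 : c 0 = 0)
    (hcb : ∀ s ∈ Set.Ioc (0 : ℝ) K, c s < b s)
    (hcpos : ∀ s ∈ Set.Ioc (0 : ℝ) K, 0 < c s)
    (lam : ℝ) (hlam0 : 0 < lam) (hlam1 : lam < 1)
    (γ : ℝ) (hγ0 : 0 ≤ γ) (hγ1 : γ ≤ (b K - lam * c K) / (1 + lam))
    (p0 : ℝ)
    (hp0lb : max ((lam * c K + (1 + lam) * γ) / ((1 - lam ^ 2) * b K)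
        - lam ^ 2 / (1 - lam ^ 2)) 0 ≤ p0)
    (hp0ub : p0 ≤ min (γ / ((1 - lam) * b K)) 1)
    (p : Set.Icc (0 : ℝ) K → ℝ)
    (hp : ∀ y : Set.Icc (0 : ℝ) K,
      p y = (lam * c ↑y + (1 + lam) * γ) / (lam ^ 2 * b K)
        - ((1 - lam ^ 2) / lam ^ 2) * p0)
    (σX0 : Measure (Set.Icc (0 : ℝ) K))
    (hσX0 : σX0 =
      ENNReal.ofReal p0 • Measure.dirac (⟨K, Set.right_mem_Icc.mpr hK.le⟩ : Set.Icc (0 : ℝ) K)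
        + ENNReal.ofReal (1 - p0) • Measure.dirac (⟨0, Set.left_mem_Icc.mpr hK.le⟩ : Set.Icc (0 : ℝ) K))
    (σX : Set.Icc (0 : ℝ) K × Set.Icc (0 : ℝ) K → Measure (Set.Icc (0 : ℝ) K))
    (hσX : ∀ q : Set.Icc (0 : ℝ) K × Set.Icc (0 : ℝ) K, σX q =
      ENNReal.ofReal (p q.2) • Measure.dirac (⟨K, Set.right_mem_Icc.mpr hK.le⟩ : Set.Icc (0 : ℝ) K)
        + ENNReal.ofReal (1 - p q.2) • Measure.dirac (⟨0, Set.left_mem_Icc.mpr hK.le⟩ : Set.Icc (0 : ℝ) K)) :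
    (∀ y : Set.Icc (0 : ℝ) K, 0 ≤ p y ∧ p y ≤ 1) ∧
    (∀ x y : Set.Icc (0 : ℝ) K,
      (b ↑x - γ) + lam * (-(c ↑y) - γ) =
        b ↑x - lam ^ 2 * (∫ s, b ↑s ∂(σX (x, y)))
          - (1 - lam ^ 2) * (∫ s, b ↑s ∂σX0)) ∧
    (∀ ν : ℕ → Measure (Set.Icc (0 : ℝ) K × Set.Icc (0 : ℝ) K),
      (∀ t, IsProbabilityMeasure (ν t)) →
      (∀ E : Set (Set.Icc (0 : ℝ) K), MeasurableSet E →
        ν 0 (E ×ˢ Set.univ) = σX0 E) →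
      (∀ (t : ℕ) (E : Set (Set.Icc (0 : ℝ) K)), MeasurableSet E →
        ν (t + 1) (E ×ˢ Set.univ) = ∫⁻ q, σX q E ∂(ν t)) →
      (1 - lam) * ∑' t : ℕ, lam ^ (2 * t) *
          ∫ q, (b ↑q.1 + lam * (-(c ↑q.2))) ∂(ν t) = γ) :=
  stmt_15_general K hK b c hbC hcC hcM hb0 hc0 hcb lam hlam0 hlam1 γ p0 hp0lb hp0ub p hp σX0 hσX0 σX
    hσX
end
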